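/- arXiv:1401.2310 — 4 statements merged into one kernel-verified Lean document; each statement's English description precedes it below -/
import Mathlib

section
/- For every odd integer a, every nonnegative integer r, and every integer n, the quadratic Gauss sum modulo a power of two satisfies |S(2^r, a, n)| ≤ 2^{1 + r/2}. -/
/-- `e z = exp(2 π i z)`. -/
noncomputable def e (z : ℂ) : ℂ := Complex.exp (2 * Real.pi * Complex.I * z)
/-- Quadratic Gauss sum with linear twist: `S(q,a,n) = Σ_{x=1}^q e((a x² + n x)/q)`. -/
noncomputable def Sq (q : ℕ) (a n : ℤ) : ℂ :=
  ∑ x ∈ Finset.Icc 1 q, e (((a * (x : ℤ)^2 + n * x : ℤ) : ℂ) / (q : ℂ))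

open Finset Complex

lemma e_int_div (q : ℕ) [NeZero q] (m : ℤ) :
    e ((m : ℂ) / (q : ℂ)) = ZMod.stdAddChar ((m : ZMod q)) := by
  rw [ZMod.stdAddChar_coe, e, mul_div_assoc]

lemma abs_stdAddChar (q : ℕ) [NeZero q] (z : ZMod q) :
    ‖ZMod.stdAddChar z‖ = 1 := by
  rw [ZMod.stdAddChar_apply]; exact Circle.norm_coe _

lemma conj_stdAddChar (q : ℕ) [NeZero q] (z : ZMod q) :
    (starRingEnd ℂ) (ZMod.stdAddChar z) = ZMod.stdAddChar (-z) := by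
  rw [ZMod.stdAddChar_apply, ← Circle.coe_inv_eq_conj, Circle.coe_inv,
    ← ZMod.stdAddChar_apply, ← AddChar.map_neg_eq_inv]

lemma Sq_eq (q : ℕ) [NeZero q] (a n : ℤ) :
    Sq q a n = ∑ z : ZMod q,
      ZMod.stdAddChar ((a : ZMod q) * z ^ 2 + (n : ZMod q) * z) := by
  have hq : 0 < q := Nat.pos_of_ne_zero (NeZero.ne q)
  rw [Sq]
  have h1 : ∀ x : ℕ, e (((a * (x:ℤ)^2 + n*(x:ℤ) : ℤ) : ℂ) / (q:ℂ))
      = ZMod.stdAddChar ((a : ZMod q) * ((x : ZMod q))^2 + (n:ZMod q) * ((x : ZMod q))) := by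
    intro x
    rw [e_int_div]
    congr 1
    push_cast
    ring
  simp only [h1]
  refine Finset.sum_nbij' (i := fun x : ℕ => ((x : ZMod q)))
    (j := fun z : ZMod q => if z = 0 then q else z.val) ?_ ?_ ?_ ?_ ?_
  · intro x _; exact Finset.mem_univ _
  · intro z _
    rw [Finset.mem_Icc]
    split_ifs with h
    · exact ⟨hq, le_refl q⟩
    · exact ⟨Nat.one_le_iff_ne_zero.mpr (fun h0 => h ((ZMod.val_eq_zero z).mp h0)),
        le_of_lt (ZMod.val_lt z)⟩
  · intro x hx
    rw [Finset.mem_Icc] at hx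
    by_cases h : (x : ZMod q) = 0
    · rw [if_pos h]
      have hdvd : q ∣ x := (ZMod.natCast_eq_zero_iff x q).mp h
      have : q ≤ x := Nat.le_of_dvd (Nat.lt_of_lt_of_le Nat.zero_lt_one hx.1) hdvd
      omega
    · rw [if_neg h]
      have hxq : x < q := by
        rcases lt_or_eq_of_le hx.2 with h' | h'
        · exact h'
        · exact absurd (h' ▸ ZMod.natCast_self q) h
      exact ZMod.val_cast_of_lt hxq
  · intro z _
    split_ifs with h
    · rw [h, ZMod.natCast_self]
    · exact ZMod.natCast_zmod_val z
  · intro x _; rfl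

lemma normsq_eq (q : ℕ) [NeZero q] (a n : ℤ) :
    Sq q a n * (starRingEnd ℂ) (Sq q a n)
      = ∑ h : ZMod q, ZMod.stdAddChar ((a:ZMod q) * h ^ 2 + (n:ZMod q) * h) *
          (if 2 * (a:ZMod q) * h = 0 then (q : ℂ) else 0) := by
  set ψ : AddChar (ZMod q) ℂ := ZMod.stdAddChar with hψ
  set A := ((a : ZMod q)) with hA
  set B := ((n : ZMod q)) with hB
  have step1 : Sq q a n * (starRingEnd ℂ) (Sq q a n)
      = ∑ w : ZMod q, ∑ h : ZMod q, ψ ((A*h^2 + B*h) + w * (2*A*h)) := by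
    rw [Sq_eq, map_sum, Finset.sum_mul_sum, Finset.sum_comm]
    refine Finset.sum_congr rfl fun w _ => ?_
    rw [← Equiv.sum_comp (Equiv.addLeft w)
      (fun z => ψ (A*z^2+B*z) * (starRingEnd ℂ) (ψ (A*w^2+B*w)))]
    refine Finset.sum_congr rfl fun h _ => ?_
    rw [conj_stdAddChar, ← AddChar.map_add_eq_mul]
    congr 1
    simp only [Equiv.coe_addLeft]
    ring
  rw [step1, Finset.sum_comm]
  refine Finset.sum_congr rfl fun h _ => ?_
  simp_rw [AddChar.map_add_eq_mul, ← Finset.mul_sum]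
  congr 1
  rw [AddChar.sum_mulShift _ (ZMod.isPrimitive_stdAddChar q), ZMod.card]
  split_ifs <;> simp

lemma isUnit_cast_of_odd (q : ℕ) [NeZero q] (hq : ∃ r : ℕ, q = 2 ^ r)
    (a : ℤ) (ha : Odd a) : IsUnit ((a : ZMod q)) := by
  obtain ⟨r, rfl⟩ := hq
  have hcop : IsCoprime (a : ℤ) ((2:ℤ)^r) := by
    apply IsCoprime.pow_right
    rw [Int.isCoprime_iff_gcd_eq_one]
    have h2 : Nat.Coprime a.natAbs 2 :=
      Nat.coprime_two_right.mpr (Int.natAbs_odd.mpr ha)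
    simpa [Int.gcd] using h2
  obtain ⟨u, v, huv⟩ := hcop
  have h0 : ((2:ZMod (2^r)))^r = 0 := by
    have : ((2^r : ℕ) : ZMod (2^r)) = 0 := ZMod.natCast_self _
    push_cast at this
    exact this
  have : (u : ZMod (2^r)) * (a : ZMod (2^r)) = 1 := by
    have := congrArg (fun x : ℤ => ((x : ZMod (2^r)))) huv
    push_cast at this
    rw [h0, mul_zero, add_zero] at this
    exact this
  rw [mul_comm] at this
  exact IsUnit.of_mul_eq_one _ this

lemma card_two_torsion (r : ℕ) [NeZero (2^r : ℕ)] :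
    (Finset.univ.filter (fun h : ZMod (2^r) => 2 * h = 0)).card ≤ 2 := by
  rcases Nat.eq_zero_or_pos r with hr | hr
  · subst hr
    calc _ ≤ (Finset.univ : Finset (ZMod (2^0))).card := Finset.card_filter_le _ _
    _ = 1 := by simp [ZMod.card]
    _ ≤ 2 := one_le_two
  · have hsub : (Finset.univ.filter (fun h : ZMod (2^r) => 2 * h = 0))
        ⊆ {0, ((2^(r-1) : ℕ) : ZMod (2^r))} := by
      intro h hh
      rw [Finset.mem_filter] at hh
      have h2 : ((2 * h.val : ℕ) : ZMod (2^r)) = 0 := by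
        push_cast [ZMod.natCast_val, ZMod.cast_id]
        exact hh.2
      have hdvd : 2^r ∣ 2 * h.val := (ZMod.natCast_eq_zero_iff _ _).mp h2
      have hdvd' : 2^(r-1) ∣ h.val := by
        have e1 : (2:ℕ)^r = 2 * 2^(r-1) := by
          conv_lhs => rw [show r = 1 + (r-1) by omega]
          rw [pow_add, pow_one]
        obtain ⟨c, hc⟩ := hdvd
        have hc2 : 2 * h.val = 2 * (2^(r-1) * c) := by rw [hc, e1, mul_assoc]
        exact ⟨c, by omega⟩
      obtain ⟨k, hk⟩ := hdvd'
      have hlt : h.val < 2^r := ZMod.val_lt h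
      have hk2 : k < 2 := by
        by_contra hk2
        push_neg at hk2
        have : 2^r ≤ h.val := by
          calc (2:ℕ)^r = 2^(r-1) * 2 := by
                conv_lhs => rw [show r = (r-1) + 1 by omega]; rw [pow_succ]
          _ ≤ 2^(r-1) * k := Nat.mul_le_mul_left _ hk2
          _ = h.val := hk.symm
        omega
      have hh' : h = ((h.val : ℕ) : ZMod (2^r)) := (ZMod.natCast_zmod_val h).symm
      interval_cases k
      · have hv : h.val = 0 := by omega
        have : h = 0 := by rw [hh', hv, Nat.cast_zero]
        simp [this]
      · have hv : h.val = 2^(r-1) := by omega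
        have : h = ((2^(r-1) : ℕ) : ZMod (2^r)) := by rw [hh', hv]
        simp [this]
    calc _ ≤ ({0, ((2^(r-1) : ℕ) : ZMod (2^r))} : Finset (ZMod (2^r))).card :=
          Finset.card_le_card hsub
    _ ≤ 2 := Finset.card_insert_le _ _ |>.trans (by simp)

theorem gauss_sum_two_power_bound (r : ℕ) (a : ℤ) (ha : Odd a) (n : ℤ) :
    ‖Sq (2 ^ r) a n‖ ≤ (2 : ℝ) ^ ((1 : ℝ) + (r : ℝ) / 2) := by
  have hq0 : (2^r : ℕ) ≠ 0 := pow_ne_zero r two_ne_zero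
  haveI : NeZero (2^r : ℕ) := ⟨hq0⟩
  set q : ℕ := 2^r with hqdef
  set S : ℂ := Sq q a n with hS
  have hAunit : IsUnit ((a : ZMod q)) := isUnit_cast_of_odd q ⟨r, rfl⟩ a ha
  have key : ‖S‖ ^ 2 ≤ 2 * (q : ℝ) := by
    have e1 : ‖S‖ ^ 2 = ‖S * (starRingEnd ℂ) S‖ := by
      rw [norm_mul, Complex.norm_conj, sq]
    rw [e1, normsq_eq q a n]
    calc ‖∑ h : ZMod q, ZMod.stdAddChar ((a:ZMod q) * h ^ 2 + (n:ZMod q) * h) *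
          (if 2 * (a:ZMod q) * h = 0 then (q : ℂ) else 0)‖
        ≤ ∑ h : ZMod q, ‖ZMod.stdAddChar ((a:ZMod q) * h ^ 2 + (n:ZMod q) * h) *
          (if 2 * (a:ZMod q) * h = 0 then (q : ℂ) else 0)‖ := norm_sum_le _ _
      _ = ∑ h : ZMod q, (if 2 * h = 0 then (q : ℝ) else 0) := by
          refine Finset.sum_congr rfl fun h _ => ?_
          rw [norm_mul, abs_stdAddChar, one_mul]
          have hiff : 2 * (a:ZMod q) * h = 0 ↔ 2 * h = 0 := by
            rw [mul_comm 2 ((a:ZMod q)), mul_assoc]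
            exact ⟨fun hh => by
              rcases hAunit with ⟨u, hu⟩
              have := congrArg (fun x => ((u⁻¹ : (ZMod q)ˣ) : ZMod q) * x) hh
              simpa [← hu, ← mul_assoc] using this,
              fun hh => by rw [hh, mul_zero]⟩
          split_ifs with h1 h2 h2
          · simp
          · exact absurd (hiff.mp h1) h2
          · exact absurd (hiff.mpr h2) h1
          · simp
      _ = ((Finset.univ.filter (fun h : ZMod q => 2 * h = 0)).card : ℝ) * (q : ℝ) := by
          rw [← Finset.sum_filter, Finset.sum_const, nsmul_eq_mul]
      _ ≤ 2 * (q : ℝ) := by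
          have := card_two_torsion r
          have hcast : ((Finset.univ.filter (fun h : ZMod q => 2 * h = 0)).card : ℝ) ≤ 2 := by
            exact_mod_cast this
          exact mul_le_mul_of_nonneg_right hcast (Nat.cast_nonneg q)
  -- now conclude
  have habs : ‖S‖ ≤ Real.sqrt (2 * (q:ℝ)) := by
    rw [← Real.sqrt_sq (norm_nonneg S)]
    exact Real.sqrt_le_sqrt key
  refine habs.trans ?_
  have hq : (q:ℝ) = (2:ℝ)^(r:ℕ) := by push_cast [hqdef]; ring
  rw [hq, ← pow_succ' 2 r]
  have : Real.sqrt ((2:ℝ)^(r+1 : ℕ)) = (2:ℝ) ^ (((r:ℝ)+1) * (1/2 : ℝ)) := by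
    rw [Real.sqrt_eq_rpow, ← Real.rpow_natCast 2 (r+1), ← Real.rpow_mul (by norm_num)]
    push_cast
    ring_nf
  rw [this]
  apply Real.rpow_le_rpow_of_exponent_le one_le_two
  linarith
end

section
/- Let p be an odd prime. Then for all integers n1, n2, n3, m one has the improved bound |T(p; n1, n2, n3, m)| ≤ p². -/
/-- Kloosterman-twisted triple Gauss sum
`T(q;n1,n2,n3,m) = Σ_{a=1,(a,q)=1}^q S(q,a,n1)S(q,a,n2)S(q,a,n3) e(ā m/q)`. -/
noncomputable def Tq (q : ℕ) (n1 n2 n3 m : ℤ) : ℂ :=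
  ∑ a ∈ (Finset.Icc 1 q).filter (fun a => Nat.Coprime a q),
    Sq q a n1 * Sq q a n2 * Sq q a n3 *
      e (((((a : ZMod q)⁻¹.val : ℤ) * m : ℤ) : ℂ) / (q : ℂ))

open Finset

namespace Taux

lemma e_add (z w : ℂ) : e (z + w) = e z * e w := by
  simp [e, mul_add, Complex.exp_add]

lemma e_int (n : ℤ) : e (n : ℂ) = 1 := by
  rw [e, show 2 * (Real.pi:ℂ) * Complex.I * n = n * (2 * Real.pi * Complex.I) by ring]
  exact Complex.exp_int_mul_two_pi_mul_I n

noncomputable def ζ (p : ℕ) : ℂ := e (1 / p)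

lemma zeta_pow (p : ℕ) [NeZero p] : ζ p ^ p = 1 := by
  have hp : (p:ℂ) ≠ 0 := Nat.cast_ne_zero.mpr (NeZero.ne p)
  rw [ζ, e, ← Complex.exp_nat_mul,
    show (p:ℂ) * (2 * Real.pi * Complex.I * (1/p)) = 2 * Real.pi * Complex.I by
      field_simp]
  exact Complex.exp_two_pi_mul_I

noncomputable def ψ (p : ℕ) [NeZero p] : AddChar (ZMod p) ℂ :=
  AddChar.zmodChar p (zeta_pow p)

lemma zeta_pow_nat (p : ℕ) [NeZero p] (v : ℕ) : ζ p ^ v = e (v / p) := by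
  rw [ζ, e, e, ← Complex.exp_nat_mul]
  ring_nf

lemma e_div (p : ℕ) [NeZero p] (k : ℤ) : e ((k:ℂ) / p) = ψ p (k : ZMod p) := by
  have hp : (p:ℂ) ≠ 0 := Nat.cast_ne_zero.mpr (NeZero.ne p)
  have h1 : (k:ℂ) / p = ((k % p : ℤ) : ℂ)/p + ((k / (p:ℤ) : ℤ) : ℂ) := by
    field_simp
    rw [mul_comm]
    exact_mod_cast (Int.emod_add_ediv_mul k p).symm
  rw [h1, e_add, e_int, mul_one, ψ, AddChar.zmodChar_apply, zeta_pow_nat]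
  congr 2
  rw [← ZMod.val_intCast k]
  push_cast
  ring

lemma sum_Icc_eq_sum_zmod (p : ℕ) [NeZero p] (F : ZMod p → ℂ) :
    ∑ x ∈ Icc 1 p, F (x : ZMod p) = ∑ z : ZMod p, F z := by
  have hp : 0 < p := Nat.pos_of_ne_zero (NeZero.ne p)
  refine Finset.sum_nbij' (i := fun x => (x : ZMod p))
    (j := fun z => if z = 0 then p else z.val) ?_ ?_ ?_ ?_ ?_
  · intro a _; exact Finset.mem_univ _
  · intro z _
    by_cases h : z = 0
    · simp [h, hp, Nat.one_le_iff_ne_zero.mpr (NeZero.ne p)]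
    · simp only [h, if_neg h, Finset.mem_Icc]
      exact ⟨Nat.one_le_iff_ne_zero.mpr (fun hv => h ((ZMod.val_eq_zero z).mp hv)),
        le_of_lt (ZMod.val_lt z)⟩
  · intro a ha
    rw [Finset.mem_Icc] at ha
    by_cases h : (a : ZMod p) = 0
    · have : p ∣ a := (ZMod.natCast_eq_zero_iff a p).mp h
      have : a = p := le_antisymm ha.2 (Nat.le_of_dvd (Nat.lt_of_lt_of_le Nat.one_pos ha.1) this)
      simp [h, this]
    · have hlt : a < p := by
        rcases Nat.lt_or_ge a p with h1 | h1
        · exact h1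
        · exact absurd (by rw [le_antisymm ha.2 h1]; exact ZMod.natCast_self p) h
      simp [h, ZMod.val_natCast_of_lt hlt]
  · intro z _
    by_cases h : z = 0
    · simp [h]
    · simp [h, ZMod.natCast_val, ZMod.cast_id]
  · intro a _; rfl

section Prime

variable (p : ℕ) [hp : Fact p.Prime]

noncomputable def χ : MulChar (ZMod p) ℂ :=
  (quadraticChar (ZMod p)).ringHomComp (Int.castRingHom ℂ)

noncomputable def g : ℂ := gaussSum (χ p) (ψ p)

lemma chi_apply (z : ZMod p) : χ p z = ((quadraticChar (ZMod p) z : ℤ) : ℂ) := rfl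

lemma hF (hodd : p ≠ 2) : ringChar (ZMod p) ≠ 2 := by
  rw [ZMod.ringChar_zmod_n]; exact hodd

lemma chi_ne_one (hodd : p ≠ 2) : χ p ≠ 1 :=
  (MulChar.ringHomComp_ne_one_iff Int.cast_injective).mpr
    (quadraticChar_ne_one (hF p hodd))

lemma chi_quadratic : (χ p).IsQuadratic :=
  (quadraticChar_isQuadratic (ZMod p)).comp _

lemma chi_sq_one {z : ZMod p} (hz : z ≠ 0) : χ p z * χ p z = 1 := by
  rw [chi_apply, ← Int.cast_mul, ← pow_two]
  rw [quadraticChar_sq_one hz]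
  norm_num

lemma psi_ne_one : ψ p ≠ 1 := by
  intro h
  have h1 : ψ p ((1:ℤ) : ZMod p) = 1 := by rw [h]; rfl
  rw [← e_div] at h1
  have hp2 : (2:ℤ) ≤ p := by exact_mod_cast hp.out.two_le
  have hpc : (p:ℂ) ≠ 0 := Nat.cast_ne_zero.mpr hp.out.ne_zero
  rw [e] at h1
  obtain ⟨n, hn⟩ := Complex.exp_eq_one_iff.mp h1
  have h2 : ((1:ℤ):ℂ) / p = n := by
    apply mul_left_cancel₀ Complex.two_pi_I_ne_zero
    rw [show (2 * Real.pi * Complex.I : ℂ) * ((1:ℤ)/p) = 2 * Real.pi * Complex.I * ((1:ℤ):ℂ)/p by ring] at hn ⊢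
    rw [hn]; ring
  have h3 : ((n * p : ℤ) : ℂ) = ((1:ℤ):ℂ) := by
    push_cast
    rw [← h2]
    field_simp
    norm_num
  have h4 : n * p = 1 := Int.cast_injective h3
  have h5 : (p:ℤ) ∣ 1 := ⟨n, by linarith⟩
  have h6 := Int.le_of_dvd one_pos h5
  linarith

lemma psi_prim : (ψ p).IsPrimitive := AddChar.IsPrimitive.of_ne_one (psi_ne_one p)

end Prime

section Prime2

variable (p : ℕ) [hp : Fact p.Prime]

lemma sum_psi_zero : ∑ s : ZMod p, ψ p s = 0 :=
  AddChar.sum_eq_zero_of_ne_one (psi_ne_one p)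

lemma sum_psi_mul {z : ZMod p} (hz : z ≠ 0) : ∑ t : ZMod p, ψ p (z * t) = 0 := by
  have h := Fintype.sum_bijective (fun t : ZMod p => z*t) (mulLeft_bijective₀ z hz)
    (fun t => ψ p (z*t)) (fun s => ψ p s) (fun t => rfl)
  rw [h, sum_psi_zero p]

lemma sum_chi_psi {z : ZMod p} (hz : z ≠ 0) :
    ∑ t : ZMod p, χ p t * ψ p (z * t) = χ p z * g p := by
  have hu := gaussSum_mulShift (χ p) (ψ p) (Units.mk0 z hz)
  have he : gaussSum (χ p) (AddChar.mulShift (ψ p) (Units.mk0 z hz))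
      = ∑ t : ZMod p, χ p t * ψ p (z * t) := by
    simp [gaussSum, AddChar.mulShift_apply]
  rw [he] at hu
  calc ∑ t : ZMod p, χ p t * ψ p (z * t)
      = (χ p z * χ p z) * ∑ t : ZMod p, χ p t * ψ p (z * t) := by
        rw [chi_sq_one p hz, one_mul]
    _ = χ p z * g p := by
        rw [Units.val_mk0] at hu
        rw [mul_assoc, hu]; rfl

lemma sum_psi_sq (hodd : p ≠ 2) {z : ZMod p} (hz : z ≠ 0) :
    ∑ x : ZMod p, ψ p (z * x^2) = χ p z * g p := by
  rw [← Finset.sum_fiberwise' (univ : Finset (ZMod p)) (fun x => x^2) (fun t => ψ p (z * t))]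
  have hstep : ∀ j : ZMod p, ∑ _i ∈ univ.filter (fun i => i^2 = j), ψ p (z*j)
      = (((quadraticChar (ZMod p) j : ℤ) : ℂ) + 1) * ψ p (z * j) := by
    intro j
    rw [Finset.sum_const, nsmul_eq_mul]
    congr 1
    have hc := quadraticChar_card_sqrts (hF p hodd) j
    rw [Set.toFinset_setOf] at hc
    exact_mod_cast hc
  calc ∑ j : ZMod p, ∑ _i ∈ univ.filter (fun i => i^2 = j), ψ p (z*j)
      = ∑ j : ZMod p, ((((quadraticChar (ZMod p) j : ℤ) : ℂ) + 1) * ψ p (z * j)) := by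
        exact Finset.sum_congr rfl (fun j _ => hstep j)
    _ = ∑ j : ZMod p, (χ p j * ψ p (z * j)) + ∑ j : ZMod p, ψ p (z * j) := by
        rw [← Finset.sum_add_distrib]
        exact Finset.sum_congr rfl (fun j _ => by rw [chi_apply]; ring)
    _ = χ p z * g p := by rw [sum_chi_psi p hz, sum_psi_mul p hz, add_zero]

lemma two_ne_zero' (hodd : p ≠ 2) : (2 : ZMod p) ≠ 0 := by
  intro h
  have h2 : ((2:ℕ) : ZMod p) = 0 := by exact_mod_cast h
  have hd := (ZMod.natCast_eq_zero_iff 2 p).mp h2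
  exact hodd ((Nat.prime_dvd_prime_iff_eq hp.out Nat.prime_two).mp hd)

lemma SS_eval (hodd : p ≠ 2) {a : ZMod p} (ha : a ≠ 0) (n : ℤ) :
    ∑ x : ZMod p, ψ p (a * x^2 + (n : ZMod p) * x)
      = χ p a * g p * ψ p (-(n : ZMod p)^2 * (4 * a)⁻¹) := by
  have h2 : (2 : ZMod p) ≠ 0 := two_ne_zero' p hodd
  have h4 : (4 : ZMod p) ≠ 0 := by
    have h : (4 : ZMod p) = 2 * 2 := by norm_num
    rw [h]; exact mul_ne_zero h2 h2
  set b := (n : ZMod p) * (2*a)⁻¹ with hb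
  have key : ∀ x : ZMod p, a * x^2 + (n : ZMod p) * x
      = a*(x+b)^2 + (-(n : ZMod p)^2 * (4*a)⁻¹) := by
    intro x
    rw [hb]
    field_simp
    ring
  calc ∑ x : ZMod p, ψ p (a * x^2 + (n : ZMod p) * x)
      = ∑ x : ZMod p, ψ p (a*(x+b)^2) * ψ p (-(n : ZMod p)^2 * (4*a)⁻¹) := by
        refine Finset.sum_congr rfl (fun x _ => ?_)
        rw [key x, AddChar.map_add_eq_mul]
    _ = (∑ x : ZMod p, ψ p (a*(x+b)^2)) * ψ p (-(n : ZMod p)^2 * (4*a)⁻¹) := by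
        rw [← Finset.sum_mul]
    _ = (∑ y : ZMod p, ψ p (a*y^2)) * ψ p (-(n : ZMod p)^2 * (4*a)⁻¹) := by
        congr 1
        exact Fintype.sum_equiv (Equiv.addRight b) _ _ (fun x => rfl)
    _ = χ p a * g p * ψ p (-(n : ZMod p)^2 * (4*a)⁻¹) := by
        rw [sum_psi_sq p hodd ha]

end Prime2

section Prime3

variable (p : ℕ) [hp : Fact p.Prime]

lemma abs_chi {z : ZMod p} (hz : z ≠ 0) : ‖χ p z‖ = 1 := by
  have h := congrArg (norm : ℂ → ℝ) (chi_sq_one p hz)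
  rw [norm_mul, norm_one] at h
  rcases mul_self_eq_one_iff.mp h with h1 | h1
  · exact h1
  · linarith [norm_nonneg (χ p z), h1]

lemma abs_g_sq (hodd : p ≠ 2) : ‖g p‖ ^ 2 = (p : ℝ) := by
  have hsq := gaussSum_sq (chi_ne_one p hodd) (chi_quadratic p) (psi_prim p)
  have h := congrArg (norm : ℂ → ℝ) hsq
  rw [norm_pow, norm_mul] at h
  rw [g] at *
  rw [h, abs_chi p (neg_ne_zero.mpr (one_ne_zero : (1 : ZMod p) ≠ 0)), one_mul,
    ZMod.card p, Complex.norm_natCast]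

lemma chi_inv (z : ZMod p) : χ p z⁻¹ = χ p z := by
  by_cases hz : z = 0
  · simp [hz]
  · have h1 : χ p z⁻¹ * χ p z = 1 := by
      rw [← map_mul, inv_mul_cancel₀ hz, map_one]
    calc χ p z⁻¹ = χ p z⁻¹ * (χ p z * χ p z) := by rw [chi_sq_one p hz, mul_one]
      _ = (χ p z⁻¹ * χ p z) * χ p z := by ring
      _ = χ p z := by rw [h1, one_mul]

lemma salie (hodd : p ≠ 2) (c : ZMod p) :
    ‖∑ u : ZMod p, χ p u * ψ p (u * c)‖ ≤ ‖g p‖ := by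
  by_cases hc : c = 0
  · have h0 : ∑ u : ZMod p, χ p u * ψ p (u * c) = 0 := by
      simp only [hc, mul_zero, AddChar.map_zero_eq_one, mul_one]
      exact MulChar.sum_eq_zero_of_ne_one (chi_ne_one p hodd)
    rw [h0, norm_zero]
    exact norm_nonneg _
  · have heq : ∑ u : ZMod p, χ p u * ψ p (u * c) = χ p c * g p := by
      simp_rw [mul_comm _ c]
      exact sum_chi_psi p hc
    rw [heq, norm_mul, abs_chi p hc, one_mul]

lemma Sq_eq (A n : ℤ) :
    Sq p A n = ∑ x : ZMod p, ψ p ((A : ZMod p) * x^2 + (n : ZMod p) * x) := by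
  rw [Sq]
  have hpt : ∀ x : ℕ, e (((A * (x:ℤ)^2 + n * x : ℤ) : ℂ) / p)
      = (fun z : ZMod p => ψ p ((A : ZMod p) * z^2 + (n : ZMod p) * z)) ((x : ZMod p)) := by
    intro x
    rw [e_div]
    congr 1
    push_cast
    ring
  rw [Finset.sum_congr rfl (fun x _ => hpt x)]
  exact sum_Icc_eq_sum_zmod p (fun z => ψ p ((A : ZMod p) * z^2 + (n : ZMod p) * z))

end Prime3

section Prime4

variable (p : ℕ) [hp : Fact p.Prime]

lemma term_eval (hodd : p ≠ 2) (n1 n2 n3 m : ℤ) {z : ZMod p} (hz : z ≠ 0) :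
    (χ p z * g p * ψ p (-(n1 : ZMod p)^2 * (4*z)⁻¹)) *
    (χ p z * g p * ψ p (-(n2 : ZMod p)^2 * (4*z)⁻¹)) *
    (χ p z * g p * ψ p (-(n3 : ZMod p)^2 * (4*z)⁻¹)) * ψ p (z⁻¹ * (m : ZMod p))
    = χ p z * g p ^ 3 * ψ p (z⁻¹ * ((m : ZMod p) -
        ((n1 : ZMod p)^2 + (n2 : ZMod p)^2 + (n3 : ZMod p)^2) * (4 : ZMod p)⁻¹)) := by
  have h2 := two_ne_zero' p hodd
  have h4 : (4 : ZMod p) ≠ 0 := by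
    have h : (4 : ZMod p) = 2 * 2 := by norm_num
    rw [h]; exact mul_ne_zero h2 h2
  have hψ : ψ p (-(n1 : ZMod p)^2 * (4*z)⁻¹) * ψ p (-(n2 : ZMod p)^2 * (4*z)⁻¹) *
      ψ p (-(n3 : ZMod p)^2 * (4*z)⁻¹) * ψ p (z⁻¹ * (m : ZMod p))
      = ψ p (z⁻¹ * ((m : ZMod p) -
        ((n1 : ZMod p)^2 + (n2 : ZMod p)^2 + (n3 : ZMod p)^2) * (4 : ZMod p)⁻¹)) := by
    rw [← AddChar.map_add_eq_mul, ← AddChar.map_add_eq_mul, ← AddChar.map_add_eq_mul]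
    congr 1
    rw [mul_inv]
    ring
  calc (χ p z * g p * ψ p (-(n1 : ZMod p)^2 * (4*z)⁻¹)) *
    (χ p z * g p * ψ p (-(n2 : ZMod p)^2 * (4*z)⁻¹)) *
    (χ p z * g p * ψ p (-(n3 : ZMod p)^2 * (4*z)⁻¹)) * ψ p (z⁻¹ * (m : ZMod p))
      = (χ p z * χ p z) * χ p z * g p ^ 3 *
        (ψ p (-(n1 : ZMod p)^2 * (4*z)⁻¹) * ψ p (-(n2 : ZMod p)^2 * (4*z)⁻¹) *
         ψ p (-(n3 : ZMod p)^2 * (4*z)⁻¹) * ψ p (z⁻¹ * (m : ZMod p))) := by ring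
    _ = χ p z * g p ^ 3 * ψ p (z⁻¹ * ((m : ZMod p) -
        ((n1 : ZMod p)^2 + (n2 : ZMod p)^2 + (n3 : ZMod p)^2) * (4 : ZMod p)⁻¹)) := by
        rw [chi_sq_one p hz, one_mul, hψ]

end Prime4

theorem main (p : ℕ) (hp : p.Prime) (hodd : p ≠ 2) (n1 n2 n3 m : ℤ) :
    ‖Tq p n1 n2 n3 m‖ ≤ (p : ℝ) ^ 2 := by
  haveI : Fact p.Prime := ⟨hp⟩
  set c : ZMod p := (m : ZMod p) -
    ((n1 : ZMod p)^2 + (n2 : ZMod p)^2 + (n3 : ZMod p)^2) * (4 : ZMod p)⁻¹ with hc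
  have hpt : ∀ a ∈ Finset.Icc 1 p,
      (if Nat.Coprime a p then Sq p a n1 * Sq p a n2 * Sq p a n3 *
        e (((((a : ZMod p)⁻¹.val : ℤ) * m : ℤ) : ℂ) / (p : ℂ)) else 0)
      = (fun z : ZMod p => if z = 0 then (0:ℂ) else χ p z * g p ^ 3 * ψ p (z⁻¹ * c))
          ((a : ZMod p)) := by
    intro a _
    by_cases hco : Nat.Coprime a p
    · have hz : (a : ZMod p) ≠ 0 := ((ZMod.isUnit_iff_coprime a p).mpr hco).ne_zero
      rw [if_pos hco]
      simp only [if_neg hz]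
      have hS : ∀ n : ℤ, Sq p a n
          = χ p (a : ZMod p) * g p * ψ p (-(n : ZMod p)^2 * (4 * (a : ZMod p))⁻¹) := by
        intro n
        rw [Sq_eq p]
        have hcast : (((a : ℕ) : ℤ) : ZMod p) = (a : ZMod p) := by push_cast; rfl
        rw [hcast]
        exact SS_eval p hodd hz n
      have hE : e (((((a : ZMod p)⁻¹.val : ℤ) * m : ℤ) : ℂ) / (p : ℂ))
          = ψ p ((a : ZMod p)⁻¹ * (m : ZMod p)) := by
        rw [e_div]
        congr 1
        push_cast
        rw [ZMod.natCast_val, ZMod.cast_id]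
      rw [hS n1, hS n2, hS n3, hE]
      exact term_eval p hodd n1 n2 n3 m hz
    · rw [if_neg hco]
      have hdvd : p ∣ a := by
        by_contra hnd
        exact hco (Nat.coprime_comm.mp (hp.coprime_iff_not_dvd.mpr hnd))
      have hz : (a : ZMod p) = 0 := (ZMod.natCast_eq_zero_iff a p).mpr hdvd
      simp [hz]
  have hT : Tq p n1 n2 n3 m = g p ^ 3 * ∑ u : ZMod p, χ p u * ψ p (u * c) := by
    rw [Tq, Finset.sum_filter, Finset.sum_congr rfl hpt,
      sum_Icc_eq_sum_zmod p (fun z : ZMod p => if z = 0 then (0:ℂ) else χ p z * g p ^ 3 * ψ p (z⁻¹ * c))]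
    have hGH : ∀ z : ZMod p,
        (if z = 0 then (0:ℂ) else χ p z * g p ^ 3 * ψ p (z⁻¹ * c))
        = (fun u : ZMod p => if u = 0 then (0:ℂ) else χ p u * g p ^ 3 * ψ p (u * c)) z⁻¹ := by
      intro z
      by_cases hz : z = 0
      · simp [hz]
      · simp only [if_neg hz, if_neg (inv_ne_zero hz)]
        rw [chi_inv p z]
    rw [Finset.sum_congr rfl (fun z _ => hGH z)]
    have hrw : (∑ z : ZMod p,
          (fun u : ZMod p => if u = 0 then (0:ℂ) else χ p u * g p ^ 3 * ψ p (u * c)) z⁻¹)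
        = ∑ u : ZMod p, (if u = 0 then (0:ℂ) else χ p u * g p ^ 3 * ψ p (u * c)) :=
      Fintype.sum_bijective _ inv_involutive.bijective _ _ (fun z => rfl)
    rw [hrw]
    have hH : ∀ u : ZMod p,
        (if u = 0 then (0:ℂ) else χ p u * g p ^ 3 * ψ p (u * c))
        = g p ^ 3 * (χ p u * ψ p (u * c)) := by
      intro u
      by_cases hu : u = 0
      · simp [hu, MulChar.map_zero]
      · rw [if_neg hu]; ring
    rw [Finset.sum_congr rfl (fun u _ => hH u), ← Finset.mul_sum]
  rw [hT, norm_mul, norm_pow]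
  have hg2 := abs_g_sq p hodd
  calc ‖g p‖ ^ 3 * ‖∑ u : ZMod p, χ p u * ψ p (u * c)‖
      ≤ ‖g p‖ ^ 3 * ‖g p‖ :=
        mul_le_mul_of_nonneg_left (salie p hodd c) (pow_nonneg (norm_nonneg _) 3)
    _ = (‖g p‖ ^ 2) ^ 2 := by ring
    _ = (p : ℝ) ^ 2 := by rw [hg2]

end Taux

theorem T_odd_prime_bound (p : ℕ) (hp : p.Prime) (hodd : p ≠ 2) (n1 n2 n3 m : ℤ) :
    ‖Tq p n1 n2 n3 m‖ ≤ (p : ℝ) ^ 2 := by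
  exact Taux.main p hp hodd n1 n2 n3 m
end

section
/- Suppose q = q1 q2 with gcd(q1, q2) = 1, where q1 is squarefree and q2 is squarefull (every prime dividing q2 does so to order at least 2). Then for all integers n1, n2, n3, m one has |T(q; n1, n2, n3, m)| ≤ 4 q1² q2^{5/2}. -/
open Finset

namespace TGB

lemma e_eq_std {q : ℕ} [NeZero q] (k : ℤ) :
    e ((k : ℂ) / (q : ℂ)) = ZMod.stdAddChar (k : ZMod q) := by
  rw [ZMod.stdAddChar_coe, e, mul_div_assoc]

lemma natCast_int_zmod_eq_self {q : ℕ} [NeZero q] (y : ZMod q) :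
    ((y.val : ℤ) : ZMod q) = y := by
  push_cast
  simp [ZMod.natCast_val, ZMod.cast_id]

lemma sum_Icc_eq_sum_zmod {q : ℕ} [NeZero q] (g : ZMod q → ℂ) :
    ∑ x ∈ Finset.Icc 1 q, g ((x : ℤ) : ZMod q) = ∑ x : ZMod q, g x := by
  have hq : 0 < q := Nat.pos_of_ne_zero (NeZero.ne q)
  apply Finset.sum_nbij' (fun x : ℕ => ((x : ℤ) : ZMod q))
    (fun y : ZMod q => if y.val = 0 then q else y.val)
  · intro a _; exact mem_univ _
  · intro y _
    simp only [mem_Icc]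
    by_cases h : y.val = 0
    · simp only [if_pos h]
      exact ⟨hq, le_refl q⟩
    · simp only [if_neg h]
      exact ⟨Nat.one_le_iff_ne_zero.mpr h, y.val_lt.le⟩
  · intro a ha
    simp only [mem_Icc] at ha
    push_cast
    by_cases h : a = q
    · subst h; simp [ZMod.natCast_self, hq.ne']
    · have hlt : a < q := lt_of_le_of_ne ha.2 h
      rw [ZMod.val_natCast_of_lt hlt]
      have h0 : a ≠ 0 := by omega
      simp [h0]
  · intro y _
    by_cases h : y.val = 0
    · simp only [if_pos h]
      have hy0 : y = 0 := ZMod.val_injective q (by simp [h])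
      push_cast
      rw [ZMod.natCast_self, hy0]
    · simp only [if_neg h]
      exact natCast_int_zmod_eq_self y
  · intro a _; rfl

lemma sum_units_eq_sum_filter {q : ℕ} [NeZero q] (g : ZMod q → ℂ) :
    ∑ u : (ZMod q)ˣ, g u = ∑ x ∈ univ.filter (fun x : ZMod q => IsUnit x), g x := by
  classical
  have himg : univ.filter (fun x : ZMod q => IsUnit x)
      = univ.image (fun u : (ZMod q)ˣ => (u : ZMod q)) := by
    ext x
    simp only [mem_filter, mem_univ, true_and, mem_image]
    exact Iff.rfl
  rw [himg, Finset.sum_image (fun a _ b _ h => Units.ext h)]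

lemma sum_Icc_coprime_eq_sum_units {q : ℕ} [NeZero q] (g : ZMod q → ℂ) :
    ∑ a ∈ (Finset.Icc 1 q).filter (fun a => Nat.Coprime a q), g ((a : ℤ) : ZMod q)
      = ∑ u : (ZMod q)ˣ, g u := by
  classical
  have hq : 0 < q := Nat.pos_of_ne_zero (NeZero.ne q)
  rw [sum_units_eq_sum_filter]
  apply Finset.sum_nbij' (fun x : ℕ => ((x : ℤ) : ZMod q))
    (fun y : ZMod q => if y.val = 0 then q else y.val)
  · intro a ha
    simp only [mem_filter, mem_Icc] at ha ⊢
    refine ⟨mem_univ _, ?_⟩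
    push_cast
    exact (ZMod.isUnit_iff_coprime a q).mpr ha.2
  · intro y hy
    simp only [mem_filter, mem_univ, true_and] at hy
    simp only [mem_filter, mem_Icc]
    by_cases h : y.val = 0
    · have hy0 : y = 0 := ZMod.val_injective q (by simpa using h)
      have hq1 : q = 1 := by
        have h0 : IsUnit ((0 : ℕ) : ZMod q) := by rw [Nat.cast_zero, ← hy0]; exact hy
        have h1 := (ZMod.isUnit_iff_coprime 0 q).mp h0
        simpa [Nat.coprime_zero_left] using h1
      subst hq1
      simp only [if_pos h]
      exact ⟨⟨le_refl 1, le_refl 1⟩, Nat.coprime_one_left 1⟩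
    · simp only [if_neg h]
      refine ⟨⟨Nat.one_le_iff_ne_zero.mpr h, y.val_lt.le⟩, ?_⟩
      rw [← ZMod.isUnit_iff_coprime]
      rw [show ((y.val : ℕ) : ZMod q) = y from by
        simpa using natCast_int_zmod_eq_self y]
      exact hy
  · intro a ha
    simp only [mem_filter, mem_Icc] at ha
    push_cast
    by_cases h : a = q
    · subst h; simp [ZMod.natCast_self, hq.ne']
    · have hlt : a < q := lt_of_le_of_ne ha.1.2 h
      rw [ZMod.val_natCast_of_lt hlt]
      have h0 : a ≠ 0 := by omega
      simp [h0]
  · intro y _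
    by_cases h : y.val = 0
    · simp only [if_pos h]
      have hy0 : y = 0 := ZMod.val_injective q (by simp [h])
      push_cast
      rw [ZMod.natCast_self, hy0]
    · simp only [if_neg h]
      exact natCast_int_zmod_eq_self y
  · intro a _; rfl

/-- ZMod version of `Sq`. -/
noncomputable def SZ (q : ℕ) [NeZero q] (A N : ZMod q) : ℂ :=
  ∑ x : ZMod q, ZMod.stdAddChar (A * x ^ 2 + N * x)

/-- ZMod version of `Tq`. -/
noncomputable def TZ (q : ℕ) [NeZero q] (N1 N2 N3 M : ZMod q) : ℂ :=
  ∑ u : (ZMod q)ˣ, SZ q u N1 * SZ q u N2 * SZ q u N3 *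
    ZMod.stdAddChar (((u⁻¹ : (ZMod q)ˣ) : ZMod q) * M)

lemma Sq_eq_SZ {q : ℕ} [NeZero q] (a n : ℤ) :
    Sq q a n = SZ q (a : ZMod q) (n : ZMod q) := by
  rw [Sq, SZ, ← sum_Icc_eq_sum_zmod (fun x => ZMod.stdAddChar ((a : ZMod q) * x ^ 2 + (n : ZMod q) * x))]
  apply Finset.sum_congr rfl
  intro x _
  rw [e_eq_std]
  congr 1
  push_cast
  ring

lemma Tq_eq_TZ {q : ℕ} [NeZero q] (n1 n2 n3 m : ℤ) :
    Tq q n1 n2 n3 m = TZ q (n1 : ZMod q) (n2 : ZMod q) (n3 : ZMod q) (m : ZMod q) := by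
  have key := sum_Icc_coprime_eq_sum_units (q := q) (fun x => SZ q x (n1 : ZMod q) *
    SZ q x (n2 : ZMod q) * SZ q x (n3 : ZMod q) * ZMod.stdAddChar (x⁻¹ * (m : ZMod q)))
  calc Tq q n1 n2 n3 m
      = ∑ a ∈ (Finset.Icc 1 q).filter (fun a => Nat.Coprime a q),
          (fun x : ZMod q => SZ q x (n1 : ZMod q) * SZ q x (n2 : ZMod q) * SZ q x (n3 : ZMod q) *
            ZMod.stdAddChar (x⁻¹ * (m : ZMod q))) ((a : ℤ) : ZMod q) := by
        rw [Tq]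
        apply Finset.sum_congr rfl
        intro a _
        simp only
        rw [Sq_eq_SZ, Sq_eq_SZ, Sq_eq_SZ, e_eq_std]
        push_cast
        congr 1
        congr 1
        simp [ZMod.natCast_val, ZMod.cast_id]
    _ = ∑ u : (ZMod q)ˣ, (fun x : ZMod q => SZ q x (n1 : ZMod q) * SZ q x (n2 : ZMod q) *
          SZ q x (n3 : ZMod q) * ZMod.stdAddChar (x⁻¹ * (m : ZMod q))) (u : ZMod q) := key
    _ = TZ q (n1 : ZMod q) (n2 : ZMod q) (n3 : ZMod q) (m : ZMod q) := by
        rw [TZ]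
        apply Finset.sum_congr rfl
        intro u _
        simp only [ZMod.inv_coe_unit]

end TGB

namespace TGB
open Finset

local notation "Ψ" => ZMod.stdAddChar

lemma psi_abs {q : ℕ} [NeZero q] (z : ZMod q) : ‖Ψ z‖ = 1 := by
  rw [show z = ((z.val : ℤ) : ZMod q) from (natCast_int_zmod_eq_self z).symm,
    ZMod.stdAddChar_coe]
  rw [show (2 * (Real.pi : ℂ) * Complex.I * ((z.val : ℤ) : ℂ) / (q : ℂ))
      = ((2 * Real.pi * (z.val : ℝ) / (q : ℝ) : ℝ) : ℂ) * Complex.I by push_cast; ring]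
  exact Complex.norm_exp_ofReal_mul_I _

lemma psi_conj {q : ℕ} [NeZero q] (z : ZMod q) :
    (starRingEnd ℂ) (Ψ z) = Ψ (-z) := by
  rw [AddChar.map_neg_eq_inv]
  have h1 : Ψ z * (starRingEnd ℂ) (Ψ z) = 1 := by
    rw [Complex.mul_conj, Complex.normSq_eq_norm_sq, psi_abs]
    norm_num
  exact (inv_eq_of_mul_eq_one_right h1).symm

lemma psi_sum {q : ℕ} [NeZero q] (c : ZMod q) :
    ∑ x : ZMod q, Ψ (c * x) = if c = 0 then (q : ℂ) else 0 := by
  classical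
  have h := AddChar.sum_mulShift (ψ := ZMod.stdAddChar (N := q)) c
    (ZMod.isPrimitive_stdAddChar q)
  simp only [mul_comm] at h
  rw [h]
  simp [ZMod.card]

/-- The key second-moment identity for the twisted Gauss sum. -/
lemma SZ_mul_conj {q : ℕ} [NeZero q] (A : (ZMod q)ˣ) (N : ZMod q) :
    SZ q A N * (starRingEnd ℂ) (SZ q A N)
      = (q : ℂ) * ∑ h ∈ univ.filter (fun h : ZMod q => 2 * h = 0),
          Ψ ((A : ZMod q) * h ^ 2 + N * h) := by
  classical
  rw [SZ, map_sum, Finset.sum_mul_sum]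
  have step1 : ∀ x y : ZMod q,
      Ψ ((A : ZMod q) * x ^ 2 + N * x) * (starRingEnd ℂ) (Ψ ((A : ZMod q) * y ^ 2 + N * y))
        = Ψ ((A : ZMod q) * x ^ 2 + N * x - ((A : ZMod q) * y ^ 2 + N * y)) := by
    intro x y
    rw [psi_conj, ← AddChar.map_add_eq_mul, sub_eq_add_neg]
  simp_rw [step1]
  -- reindex x = y + h
  have step2 : ∀ y : ZMod q, ∑ x : ZMod q,
      Ψ ((A : ZMod q) * x ^ 2 + N * x - ((A : ZMod q) * y ^ 2 + N * y))
      = ∑ h : ZMod q, Ψ ((A : ZMod q) * h ^ 2 + N * h) * Ψ ((2 * (A : ZMod q) * h) * y) := by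
    intro y
    have := Fintype.sum_equiv (Equiv.addLeft y)
      (fun h => Ψ ((A : ZMod q) * h ^ 2 + N * h) * Ψ ((2 * (A : ZMod q) * h) * y))
      (fun x => Ψ ((A : ZMod q) * x ^ 2 + N * x - ((A : ZMod q) * y ^ 2 + N * y)))
      (fun h => by
        dsimp only [Equiv.coe_addLeft]
        rw [← AddChar.map_add_eq_mul]
        congr 1
        ring)
    exact this.symm
  rw [Finset.sum_comm]
  simp_rw [step2]
  have step3 : ∀ h : ZMod q,
      ∑ y : ZMod q, Ψ ((A : ZMod q) * h ^ 2 + N * h) * Ψ ((2 * (A : ZMod q) * h) * y)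
      = Ψ ((A : ZMod q) * h ^ 2 + N * h) * (if 2 * (A : ZMod q) * h = 0 then (q : ℂ) else 0) := by
    intro h
    rw [← Finset.mul_sum, psi_sum]
  rw [Finset.sum_comm]
  simp_rw [step3]
  have hcond : ∀ h : ZMod q, (2 * (A : ZMod q) * h = 0) ↔ (2 * h = 0) := by
    intro h
    rw [show 2 * (A : ZMod q) * h = (A : ZMod q) * (2 * h) by ring]
    exact Units.mul_right_eq_zero A
  rw [Finset.mul_sum, ← Finset.sum_filter_ne_zero]
  rw [show (univ.filter (fun h : ZMod q => 2 * h = 0))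
      = univ.filter (fun h : ZMod q =>
          Ψ ((A : ZMod q) * h ^ 2 + N * h) * (if 2 * (A : ZMod q) * h = 0 then (q : ℂ) else 0) ≠ 0)
    from ?_]
  · apply Finset.sum_congr rfl
    intro h hh
    simp only [mem_filter, mem_univ, true_and] at hh
    by_cases hc : 2 * (A : ZMod q) * h = 0
    · rw [if_pos hc]; ring
    · exfalso; apply hh; rw [if_neg hc]; ring
  · ext h
    simp only [mem_filter, mem_univ, true_and, ← hcond h]
    constructor
    · intro hc
      rw [if_pos hc]
      intro habs
      have h1 : ‖Ψ ((A : ZMod q) * h ^ 2 + N * h) * (q : ℂ)‖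
          = (q : ℝ) := by
        rw [norm_mul, psi_abs, one_mul, Complex.norm_natCast]
      rw [habs] at h1
      simp only [norm_zero] at h1
      exact (Nat.cast_pos.mpr (Nat.pos_of_ne_zero (NeZero.ne q))).ne h1
    · intro hne
      by_contra hc
      rw [if_neg hc, mul_zero] at hne
      exact hne rfl

lemma SZ_abs_sq_le {q : ℕ} [NeZero q] (A : (ZMod q)ˣ) (N : ZMod q) :
    ‖SZ q A N‖ ^ 2
      ≤ (q : ℝ) * (univ.filter (fun h : ZMod q => 2 * h = 0)).card := by
  have h := SZ_mul_conj A N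
  have habs : ‖SZ q A N‖ ^ 2 = ‖SZ q A N * (starRingEnd ℂ) (SZ q A N)‖ := by
    rw [norm_mul, Complex.norm_conj, sq]
  rw [habs, h, norm_mul, Complex.norm_natCast]
  gcongr
  calc ‖∑ h ∈ univ.filter (fun h : ZMod q => 2 * h = 0),
        Ψ ((A : ZMod q) * h ^ 2 + N * h)‖
      ≤ ∑ h ∈ univ.filter (fun h : ZMod q => 2 * h = 0),
        ‖Ψ ((A : ZMod q) * h ^ 2 + N * h)‖ := by
        exact norm_sum_le _ _
    _ = (univ.filter (fun h : ZMod q => 2 * h = 0)).card := by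
        rw [Finset.sum_congr rfl (fun h _ => psi_abs _)]
        simp
end TGB

namespace TGB
open Finset

local notation "Ψ" => ZMod.stdAddChar

lemma two_torsion_odd {q : ℕ} [NeZero q] (hodd : Odd q) :
    univ.filter (fun h : ZMod q => 2 * h = 0) = {0} := by
  classical
  ext h
  simp only [mem_filter, mem_univ, true_and, mem_singleton]
  constructor
  · intro h2
    have h2u : IsUnit (2 : ZMod q) := by
      have : ((2 : ℕ) : ZMod q) = (2 : ZMod q) := by norm_cast
      rw [← this]
      rw [ZMod.isUnit_iff_coprime]
      exact (Nat.prime_two.coprime_iff_not_dvd).mpr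
        (by have := Nat.odd_iff.mp hodd; omega)
    rcases h2u with ⟨u, hu⟩
    rw [← hu] at h2
    exact (Units.mul_right_eq_zero u).mp h2
  · intro h0; rw [h0, mul_zero]

lemma two_torsion_card_le {q : ℕ} [NeZero q] :
    (univ.filter (fun h : ZMod q => 2 * h = 0)).card ≤ 2 := by
  classical
  classical
  have hsub : univ.filter (fun h : ZMod q => 2 * h = 0)
      ⊆ ({0, ((q / 2 : ℕ) : ZMod q)} : Finset (ZMod q)) := by
    intro h hh
    simp only [mem_filter, mem_univ, true_and] at hh
    have hcast : ((2 * h.val : ℕ) : ZMod q) = 0 := by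
      push_cast
      rw [show ((h.val : ℕ) : ZMod q) = h by
        simpa using natCast_int_zmod_eq_self h] at *
      exact hh
    have hdvd : q ∣ 2 * h.val := (ZMod.natCast_eq_zero_iff _ q).mp hcast
    have hlt : h.val < q := h.val_lt
    simp only [mem_insert, mem_singleton]
    rcases hdvd with ⟨c, hc⟩
    have hc2 : c < 2 := by nlinarith [Nat.pos_of_ne_zero (NeZero.ne q)]
    interval_cases c
    · left
      have : h.val = 0 := by omega
      apply ZMod.val_injective
      simpa using this
    · right
      have hv : h.val = q / 2 := by omega
      have hcv : ((h.val : ℕ) : ZMod q) = h := by simpa using natCast_int_zmod_eq_self h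
      rw [← hcv, hv]
  refine le_trans (Finset.card_le_card hsub) ?_
  refine le_trans (Finset.card_insert_le _ _) ?_
  simp

lemma SZ_abs_le_sqrt_odd {q : ℕ} [NeZero q] (hodd : Odd q) (A : (ZMod q)ˣ) (N : ZMod q) :
    ‖SZ q A N‖ ≤ Real.sqrt q := by
  have h := SZ_abs_sq_le A N
  rw [two_torsion_odd hodd] at h
  simp only [Finset.card_singleton, Nat.cast_one, mul_one] at h
  have h2 := Real.sqrt_le_sqrt h
  rwa [Real.sqrt_sq (norm_nonneg _)] at h2

lemma SZ_abs_le_sqrt_two {q : ℕ} [NeZero q] (A : (ZMod q)ˣ) (N : ZMod q) :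
    ‖SZ q A N‖ ≤ Real.sqrt (2 * q) := by
  have h := SZ_abs_sq_le A N
  have h1 : ‖SZ q (A : ZMod q) N‖ ^ 2 ≤ 2 * (q : ℝ) := by
    refine le_trans h ?_
    rw [mul_comm (2 : ℝ) (q : ℝ)]
    have hc : (((univ.filter (fun h : ZMod q => 2 * h = 0)).card : ℝ)) ≤ 2 := by
      exact_mod_cast two_torsion_card_le (q := q)
    exact mul_le_mul_of_nonneg_left hc (Nat.cast_nonneg q)
  have h2 := Real.sqrt_le_sqrt h1
  rwa [Real.sqrt_sq (norm_nonneg _)] at h2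

lemma TZ_abs_le_totient {q : ℕ} [NeZero q] {B : ℝ}
    (hB : ∀ (A : (ZMod q)ˣ) (N : ZMod q), ‖SZ q A N‖ ≤ B)
    (N1 N2 N3 M : ZMod q) :
    ‖TZ q N1 N2 N3 M‖ ≤ (q.totient : ℝ) * B ^ 3 := by
  have hB0 : 0 ≤ B := le_trans (norm_nonneg _) (hB 1 N1)
  calc ‖TZ q N1 N2 N3 M‖
      ≤ ∑ u : (ZMod q)ˣ, ‖SZ q u N1 * SZ q u N2 * SZ q u N3 *
          Ψ (((u⁻¹ : (ZMod q)ˣ) : ZMod q) * M)‖ := norm_sum_le _ _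
    _ ≤ ∑ _u : (ZMod q)ˣ, B ^ 3 := by
        apply Finset.sum_le_sum
        intro u _
        rw [norm_mul, norm_mul, norm_mul, psi_abs, mul_one]
        calc ‖SZ q u N1‖ * ‖SZ q u N2‖ * ‖SZ q u N3‖
            ≤ B * B * B := by
              gcongr <;> [exact hB u N1; exact hB u N2; exact hB u N3]
          _ = B ^ 3 := by ring
    _ = (Fintype.card (ZMod q)ˣ : ℝ) * B ^ 3 := by
        rw [Finset.sum_const, Finset.card_univ, nsmul_eq_mul]
    _ = (q.totient : ℝ) * B ^ 3 := by
        rw [ZMod.card_units_eq_totient]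

lemma TZ_abs_le_of_SZ_bound {q : ℕ} [NeZero q] {B : ℝ}
    (hB : ∀ (A : (ZMod q)ˣ) (N : ZMod q), ‖SZ q A N‖ ≤ B)
    (N1 N2 N3 M : ZMod q) :
    ‖TZ q N1 N2 N3 M‖ ≤ (q : ℝ) * B ^ 3 := by
  have hB0 : 0 ≤ B := le_trans (norm_nonneg _) (hB 1 N1)
  refine le_trans (TZ_abs_le_totient hB N1 N2 N3 M) ?_
  have h := Nat.totient_le q
  have h2 : (q.totient : ℝ) ≤ (q : ℝ) := by exact_mod_cast h
  exact mul_le_mul_of_nonneg_right h2 (pow_nonneg hB0 3)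

end TGB

namespace TGB
open Finset

local notation "Ψ" => ZMod.stdAddChar

section OddPrime

variable (p : ℕ) [Fact p.Prime]

/-- The complex-valued quadratic character mod `p`. -/
noncomputable def qc : MulChar (ZMod p) ℂ :=
  (quadraticChar (ZMod p)).ringHomComp (Int.castRingHom ℂ)

lemma qc_quadratic : (qc p).IsQuadratic :=
  (quadraticChar_isQuadratic (ZMod p)).comp _

lemma ringChar_ne_two (hp2 : p ≠ 2) : ringChar (ZMod p) ≠ 2 := by
  rw [ZMod.ringChar_zmod_n]; exact hp2

lemma qc_ne_one (hp2 : p ≠ 2) : qc p ≠ 1 := by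
  obtain ⟨a, ha⟩ := quadraticChar_exists_neg_one (ringChar_ne_two p hp2)
  intro h
  have ha' : (qc p) a = -1 := by
    rw [qc, MulChar.ringHomComp_apply, ha]; norm_num
  have haunit : IsUnit a := by
    by_contra hu
    rw [(quadraticChar (ZMod p)).map_nonunit hu] at ha
    norm_num at ha
  rw [h, MulChar.one_apply haunit] at ha'
  norm_num at ha'

lemma qc_pm_one {a : ZMod p} (ha : a ≠ 0) : qc p a = 1 ∨ qc p a = -1 := by
  rcases quadraticChar_isQuadratic (ZMod p) a with h | h | h
  · exact absurd (quadraticChar_eq_zero_iff.mp h) ha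
  · left; rw [qc, MulChar.ringHomComp_apply, h]; norm_num
  · right; rw [qc, MulChar.ringHomComp_apply, h]; norm_num

lemma qc_sq_eq_one {a : ZMod p} (ha : a ≠ 0) : qc p a * qc p a = 1 := by
  rcases qc_pm_one p ha with h | h <;> rw [h] <;> norm_num

lemma qc_abs_one {a : ZMod p} (ha : a ≠ 0) : ‖qc p a‖ = 1 := by
  rcases qc_pm_one p ha with h | h <;> rw [h] <;> norm_num

/-- Gauss sum magnitude. -/
lemma abs_gaussSum (hp2 : p ≠ 2) :
    ‖gaussSum (qc p) (ZMod.stdAddChar)‖ = Real.sqrt p := by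
  have hsq := gaussSum_sq (qc_ne_one p hp2) (qc_quadratic p) (ZMod.isPrimitive_stdAddChar p)
  have h1 : ‖gaussSum (qc p) ZMod.stdAddChar‖ ^ 2 = (p : ℝ) := by
    rw [← norm_pow, hsq, norm_mul, Complex.norm_natCast, ZMod.card p,
      qc_abs_one p (by
        intro h
        exact one_ne_zero (by rw [← neg_neg (1 : ZMod p), h, neg_zero] : (1 : ZMod p) = 0)),
      one_mul]
  rw [← h1, Real.sqrt_sq (norm_nonneg _)]

/-- Pure quadratic Gauss sum with unit multiplier. -/
lemma sum_psi_mul_sq (hp2 : p ≠ 2) {A : ZMod p} (hA : A ≠ 0) :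
    ∑ x : ZMod p, Ψ (A * x ^ 2) = qc p A * gaussSum (qc p) ZMod.stdAddChar := by
  classical
  have hcount : ∀ t : ZMod p,
      ((univ.filter (fun x : ZMod p => x ^ 2 = t)).card : ℂ) = qc p t + 1 := by
    intro t
    have h := quadraticChar_card_sqrts (ringChar_ne_two p hp2) t
    rw [Set.toFinset_setOf] at h
    have h' : ((univ.filter (fun x : ZMod p => x ^ 2 = t)).card : ℤ) = quadraticChar (ZMod p) t + 1 := h
    rw [qc, MulChar.ringHomComp_apply]
    show ((univ.filter (fun x : ZMod p => x ^ 2 = t)).card : ℂ)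
      = ((quadraticChar (ZMod p) t : ℤ) : ℂ) + 1
    exact_mod_cast congrArg (Int.cast : ℤ → ℂ) h'
  have step1 : ∑ x : ZMod p, Ψ (A * x ^ 2)
      = ∑ t : ZMod p, ((univ.filter (fun x : ZMod p => x ^ 2 = t)).card : ℂ) * Ψ (A * t) := by
    rw [← Finset.sum_fiberwise univ (fun x : ZMod p => x ^ 2) (fun x => Ψ (A * x ^ 2))]
    apply Finset.sum_congr rfl
    intro t _
    have hinner : ∑ x ∈ univ.filter (fun x : ZMod p => x ^ 2 = t), Ψ (A * x ^ 2)
        = ∑ _x ∈ univ.filter (fun x : ZMod p => x ^ 2 = t), Ψ (A * t) := by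
      apply Finset.sum_congr rfl
      intro x hx
      simp only [mem_filter, mem_univ, true_and] at hx
      rw [hx]
    rw [hinner, Finset.sum_const, nsmul_eq_mul]
  rw [step1]
  have step2 : ∑ t : ZMod p, ((univ.filter (fun x : ZMod p => x ^ 2 = t)).card : ℂ) * Ψ (A * t)
      = ∑ t : ZMod p, qc p t * Ψ (A * t) + ∑ t : ZMod p, Ψ (A * t) := by
    rw [← Finset.sum_add_distrib]
    apply Finset.sum_congr rfl
    intro t _
    rw [hcount t]; ring
  rw [step2, psi_sum A, if_neg hA, add_zero]
  have step3 : ∑ t : ZMod p, qc p t * Ψ (A * t)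
      = gaussSum (qc p) (ZMod.stdAddChar.mulShift A) := by
    rw [gaussSum]
    apply Finset.sum_congr rfl
    intro t _
    rw [AddChar.mulShift_apply]
  rw [step3]
  have hkey := gaussSum_mulShift (qc p) ZMod.stdAddChar (Units.mk0 A hA)
  have hA2 := qc_sq_eq_one p hA
  calc gaussSum (qc p) (ZMod.stdAddChar.mulShift A)
      = (qc p A * qc p A) * gaussSum (qc p) (ZMod.stdAddChar.mulShift A) := by rw [hA2, one_mul]
    _ = qc p A * (qc p A * gaussSum (qc p) (ZMod.stdAddChar.mulShift A)) := by ring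
    _ = qc p A * gaussSum (qc p) ZMod.stdAddChar := by
        rw [show ((Units.mk0 A hA : (ZMod p)ˣ) : ZMod p) = A from rfl] at hkey
        rw [hkey]

lemma two_ne_zero' (hp2 : p ≠ 2) : (2 : ZMod p) ≠ 0 := by
  intro h
  have h2 : ((2 : ℕ) : ZMod p) = 0 := by simpa using h
  have hdvd : p ∣ 2 := (ZMod.natCast_eq_zero_iff 2 p).mp h2
  have := (Nat.prime_dvd_prime_iff_eq Fact.out Nat.prime_two).mp hdvd
  exact hp2 this

lemma four_ne_zero' (hp2 : p ≠ 2) : (4 : ZMod p) ≠ 0 := by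
  have h2 := two_ne_zero' p hp2
  have : (4 : ZMod p) = 2 * 2 := by norm_num
  rw [this]
  exact mul_ne_zero h2 h2

/-- Evaluation of `SZ` at an odd prime via completing the square. -/
lemma SZ_eval (hp2 : p ≠ 2) (A : (ZMod p)ˣ) (N : ZMod p) :
    SZ p (A : ZMod p) N
      = Ψ (((A : ZMod p))⁻¹ * (-(4 : ZMod p)⁻¹ * N ^ 2)) * (qc p (A : ZMod p) *
          gaussSum (qc p) ZMod.stdAddChar) := by
  classical
  set a : ZMod p := (A : ZMod p) with ha_def
  have ha : a ≠ 0 := A.ne_zero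
  have h2 : (2 : ZMod p) ≠ 0 := two_ne_zero' p hp2
  have h4 : (4 : ZMod p) ≠ 0 := four_ne_zero' p hp2
  set c : ZMod p := (2 * a)⁻¹ * N with hc_def
  have h2a : 2 * a ≠ 0 := mul_ne_zero h2 ha
  have hc : (2 * a) * c = N := by
    rw [hc_def, mul_inv_cancel_left₀ h2a]
  have hpt : ∀ x : ZMod p, a * x ^ 2 + N * x = a * (x + c) ^ 2 + (-(a * c ^ 2)) := by
    intro x
    rw [← hc]
    ring
  rw [SZ]
  calc ∑ x : ZMod p, Ψ (a * x ^ 2 + N * x)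
      = ∑ x : ZMod p, Ψ (a * (x + c) ^ 2) * Ψ (-(a * c ^ 2)) := by
        apply Finset.sum_congr rfl
        intro x _
        rw [← AddChar.map_add_eq_mul, ← hpt x]
    _ = (∑ x : ZMod p, Ψ (a * (x + c) ^ 2)) * Ψ (-(a * c ^ 2)) := by
        rw [← Finset.sum_mul]
    _ = (∑ y : ZMod p, Ψ (a * y ^ 2)) * Ψ (-(a * c ^ 2)) := by
        congr 1
        exact Fintype.sum_equiv (Equiv.addRight c)
          (fun x => Ψ (a * (x + c) ^ 2)) (fun y => Ψ (a * y ^ 2)) (fun x => rfl)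
    _ = Ψ (a⁻¹ * (-(4 : ZMod p)⁻¹ * N ^ 2)) * (qc p a * gaussSum (qc p) ZMod.stdAddChar) := by
        rw [sum_psi_mul_sq p hp2 ha]
        rw [show -(a * c ^ 2) = a⁻¹ * (-(4 : ZMod p)⁻¹ * N ^ 2) by
          rw [hc_def]
          field_simp
          ring]
        ring

/-- The central estimate: the complete sum at an odd prime. -/
lemma TZ_prime_bound (hp2 : p ≠ 2) (N1 N2 N3 M : ZMod p) :
    ‖TZ p N1 N2 N3 M‖ ≤ (p : ℝ) ^ 2 := by
  classical
  set g := gaussSum (qc p) ZMod.stdAddChar with hg_def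
  set κ : ZMod p → ZMod p := fun N => -(4 : ZMod p)⁻¹ * N ^ 2 with hκ_def
  set L : ZMod p := κ N1 + κ N2 + κ N3 + M with hL_def
  have habs_g : ‖g‖ = Real.sqrt p := abs_gaussSum p hp2
  -- rewrite TZ
  have hTZ : TZ p N1 N2 N3 M = g ^ 3 * ∑ u : (ZMod p)ˣ, qc p (u : ZMod p) *
      Ψ (((u⁻¹ : (ZMod p)ˣ) : ZMod p) * L) := by
    rw [TZ, Finset.mul_sum]
    apply Finset.sum_congr rfl
    intro u _
    rw [SZ_eval p hp2 u N1, SZ_eval p hp2 u N2, SZ_eval p hp2 u N3]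
    have hui : ((u⁻¹ : (ZMod p)ˣ) : ZMod p) = ((u : ZMod p))⁻¹ := Units.val_inv_eq_inv_val u
    rw [hui]
    have hsq := qc_sq_eq_one p (a := (u : ZMod p)) u.ne_zero
    have hψ : Ψ (((u : ZMod p))⁻¹ * κ N1) * Ψ (((u : ZMod p))⁻¹ * κ N2) *
        Ψ (((u : ZMod p))⁻¹ * κ N3) * Ψ (((u : ZMod p))⁻¹ * M)
        = Ψ (((u : ZMod p))⁻¹ * L) := by
      rw [← AddChar.map_add_eq_mul, ← AddChar.map_add_eq_mul, ← AddChar.map_add_eq_mul]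
      congr 1
      rw [hL_def]
      ring
    calc Ψ ((↑u)⁻¹ * κ N1) * (qc p ↑u * g) * (Ψ ((↑u)⁻¹ * κ N2) * (qc p ↑u * g)) *
          (Ψ ((↑u)⁻¹ * κ N3) * (qc p ↑u * g)) * Ψ ((↑u)⁻¹ * M)
        = (qc p ↑u * qc p ↑u) * qc p ↑u * g ^ 3 *
            (Ψ ((↑u)⁻¹ * κ N1) * Ψ ((↑u)⁻¹ * κ N2) * Ψ ((↑u)⁻¹ * κ N3) * Ψ ((↑u)⁻¹ * M)) := by
          ring
      _ = g ^ 3 * (qc p ↑u * Ψ ((↑u)⁻¹ * L)) := by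
          rw [hsq, one_mul, hψ]; ring
  rw [hTZ, norm_mul, norm_pow, habs_g]
  -- now bound the character sum
  have hsum : ‖∑ u : (ZMod p)ˣ, qc p (u : ZMod p) *
      Ψ (((u⁻¹ : (ZMod p)ˣ) : ZMod p) * L)‖ ≤ Real.sqrt p := by
    -- substitute u → u⁻¹
    have hinv : ∑ u : (ZMod p)ˣ, qc p (u : ZMod p) * Ψ (((u⁻¹ : (ZMod p)ˣ) : ZMod p) * L)
        = ∑ u : (ZMod p)ˣ, qc p (u : ZMod p) * Ψ ((u : ZMod p) * L) := by
      apply Fintype.sum_equiv (Equiv.inv (ZMod p)ˣ)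
      intro u
      simp only [Equiv.inv_apply]
      congr 1
      -- qc (u) = qc (u⁻¹)
      · have h1 := qc_sq_eq_one p (a := (u : ZMod p)) u.ne_zero
        have hmul : ((u⁻¹ : (ZMod p)ˣ) : ZMod p) * (u : ZMod p) = 1 := by
          rw [← Units.val_mul]
          simp
        have h2 : qc p ((u⁻¹ : (ZMod p)ˣ) : ZMod p) * qc p (u : ZMod p) = 1 := by
          rw [← map_mul, hmul, map_one]
        -- from u*u=1 and v*u=1 conclude v=u
        have : qc p ((u⁻¹ : (ZMod p)ˣ) : ZMod p) = qc p (u : ZMod p) := by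
          have h3 := h1.trans h2.symm
          exact mul_right_cancel₀ (by
            intro h0
            rw [h0, mul_zero] at h1
            exact one_ne_zero h1.symm) h3.symm
        rw [this]
    rw [hinv]
    -- relate to a Gauss sum
    have hfull : ∑ u : (ZMod p)ˣ, qc p (u : ZMod p) * Ψ ((u : ZMod p) * L)
        = gaussSum (qc p) (ZMod.stdAddChar.mulShift L) := by
      rw [gaussSum]
      have h0 : ∑ t : ZMod p, qc p t * (ZMod.stdAddChar.mulShift L) t
          = ∑ t ∈ univ.filter (fun t : ZMod p => IsUnit t), qc p t * (ZMod.stdAddChar.mulShift L) t := by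
        symm
        apply Finset.sum_subset (Finset.filter_subset _ _)
        intro t _ ht
        simp only [mem_filter, mem_univ, true_and] at ht
        rw [(qc p).map_nonunit ht, zero_mul]
      rw [h0, ← sum_units_eq_sum_filter (fun t => qc p t * (ZMod.stdAddChar.mulShift L) t)]
      apply Finset.sum_congr rfl
      intro u _
      rw [AddChar.mulShift_apply, mul_comm L]
    rw [hfull]
    by_cases hL : L = 0
    · have : gaussSum (qc p) (ZMod.stdAddChar.mulShift L) = 0 := by
        rw [gaussSum]
        have : ∀ t : ZMod p, (ZMod.stdAddChar.mulShift L) t = 1 := by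
          intro t
          rw [AddChar.mulShift_apply, hL, zero_mul]
          exact AddChar.map_zero_eq_one _
        simp_rw [this, mul_one]
        exact MulChar.sum_eq_zero_of_ne_one (qc_ne_one p hp2)
      rw [this, norm_zero]
      exact Real.sqrt_nonneg _
    · have hkey := gaussSum_mulShift (qc p) ZMod.stdAddChar (Units.mk0 L hL)
      have habs := congrArg (‖·‖) hkey
      rw [norm_mul] at habs
      rw [show ((Units.mk0 L hL : (ZMod p)ˣ) : ZMod p) = L from rfl] at habs
      rw [qc_abs_one p hL, one_mul] at habs
      rw [habs, habs_g]
  calc Real.sqrt p ^ 3 * ‖∑ u : (ZMod p)ˣ, qc p (u : ZMod p) *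
        Ψ (((u⁻¹ : (ZMod p)ˣ) : ZMod p) * L)‖
      ≤ Real.sqrt p ^ 3 * Real.sqrt p :=
        mul_le_mul_of_nonneg_left hsum (pow_nonneg (Real.sqrt_nonneg _) 3)
    _ = (Real.sqrt p) ^ 4 := by ring
    _ = (p : ℝ) ^ 2 := by
        rw [show (4 : ℕ) = 2 * 2 from rfl, pow_mul, Real.sq_sqrt (Nat.cast_nonneg p)]

end OddPrime
end TGB

namespace TGB
open Finset

local notation "Ψ" => ZMod.stdAddChar

section Split
variable {r s : ℕ} [NeZero r] [NeZero s]

instance : NeZero (r * s) := ⟨mul_ne_zero (NeZero.ne r) (NeZero.ne s)⟩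

lemma psi_split_int (u v : ℤ) (huv : u * s + v * r = 1) (k : ℤ) :
    Ψ ((k : ZMod (r * s))) = Ψ ((u * k : ℤ) : ZMod r) * Ψ ((v * k : ℤ) : ZMod s) := by
  rw [ZMod.stdAddChar_coe, ZMod.stdAddChar_coe, ZMod.stdAddChar_coe, ← Complex.exp_add]
  congr 1
  have hr : (r : ℂ) ≠ 0 := Nat.cast_ne_zero.mpr (NeZero.ne r)
  have hs : (s : ℂ) ≠ 0 := Nat.cast_ne_zero.mpr (NeZero.ne s)
  have h1 : ((u : ℂ) * (s : ℂ) + (v : ℂ) * (r : ℂ)) = 1 := by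
    exact_mod_cast congrArg (Int.cast : ℤ → ℂ) huv
  have key : ((u * k : ℤ) : ℂ) / r + ((v * k : ℤ) : ℂ) / s = (k : ℂ) / ((r : ℂ) * s) := by
    rw [div_add_div _ _ hr hs, div_eq_div_iff (mul_ne_zero hr hs) (mul_ne_zero hr hs)]
    push_cast
    linear_combination (k : ℂ) * (r : ℂ) * (s : ℂ) * h1
  push_cast at key ⊢
  linear_combination (-(2 * (Real.pi : ℂ) * Complex.I)) * key

/-- First CRT component as a ring hom. -/
noncomputable def CrH (hco : Nat.Coprime r s) : ZMod (r * s) →+* ZMod r :=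
  (RingHom.fst (ZMod r) (ZMod s)).comp (ZMod.chineseRemainder hco).toRingHom

/-- Second CRT component as a ring hom. -/
noncomputable def CsH (hco : Nat.Coprime r s) : ZMod (r * s) →+* ZMod s :=
  (RingHom.snd (ZMod r) (ZMod s)).comp (ZMod.chineseRemainder hco).toRingHom

lemma psi_split (hco : Nat.Coprime r s) (u v : ℤ) (huv : u * s + v * r = 1)
    (z : ZMod (r * s)) :
    Ψ z = Ψ ((u : ZMod r) * CrH hco z) * Ψ ((v : ZMod s) * CsH hco z) := by
  conv_lhs => rw [show z = ((z.val : ℤ) : ZMod (r * s)) from (natCast_int_zmod_eq_self z).symm]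
  rw [show CrH hco z = ((u * 0 + (z.val : ℤ) : ℤ) : ZMod r) from ?_,
      show CsH hco z = (((z.val : ℤ)) : ZMod s) from ?_]
  · rw [psi_split_int u v huv]
    congr 1
    · congr 1; push_cast; ring
    · congr 1; push_cast; ring
  · conv_lhs => rw [show z = ((z.val : ℤ) : ZMod (r * s)) from (natCast_int_zmod_eq_self z).symm]
    rw [map_intCast]
  · conv_lhs => rw [show z = ((z.val : ℤ) : ZMod (r * s)) from (natCast_int_zmod_eq_self z).symm]
    rw [map_intCast]
    push_cast; ring

lemma crh_apply (hco : Nat.Coprime r s) (z : ZMod (r * s)) :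
    CrH hco z = ((ZMod.chineseRemainder hco) z).1 := rfl

lemma csh_apply (hco : Nat.Coprime r s) (z : ZMod (r * s)) :
    CsH hco z = ((ZMod.chineseRemainder hco) z).2 := rfl

lemma SZ_split (hco : Nat.Coprime r s) (u v : ℤ) (huv : u * s + v * r = 1)
    (A N : ZMod (r * s)) :
    SZ (r * s) A N = SZ r ((u : ZMod r) * CrH hco A) ((u : ZMod r) * CrH hco N)
      * SZ s ((v : ZMod s) * CsH hco A) ((v : ZMod s) * CsH hco N) := by
  classical
  set G : ZMod r → ℂ := fun i => Ψ ((u : ZMod r) * CrH hco A * i ^ 2 + (u : ZMod r) * CrH hco N * i)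
    with hG_def
  set H : ZMod s → ℂ := fun j => Ψ ((v : ZMod s) * CsH hco A * j ^ 2 + (v : ZMod s) * CsH hco N * j)
    with hH_def
  show ∑ x : ZMod (r * s), Ψ (A * x ^ 2 + N * x) = (∑ i : ZMod r, G i) * (∑ j : ZMod s, H j)
  calc ∑ x : ZMod (r * s), Ψ (A * x ^ 2 + N * x)
      = ∑ w : ZMod r × ZMod s, G w.1 * H w.2 := by
        apply Fintype.sum_equiv (ZMod.chineseRemainder hco).toEquiv
        intro x
        rw [psi_split hco u v huv (A * x ^ 2 + N * x)]
        have hx1 : ((ZMod.chineseRemainder hco).toEquiv x) = (ZMod.chineseRemainder hco) x := rfl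
        rw [hG_def, hH_def]
        simp only [hx1]
        congr 1
        · congr 1
          rw [map_add, map_mul, map_mul, map_pow, ← crh_apply hco x]
          ring
        · congr 1
          rw [map_add, map_mul, map_mul, map_pow, ← csh_apply hco x]
          ring
    _ = ∑ i : ZMod r, ∑ j : ZMod s, G i * H j := by
          exact Fintype.sum_prod_type (f := fun w : ZMod r × ZMod s => G w.1 * H w.2)
    _ = (∑ i : ZMod r, G i) * (∑ j : ZMod s, H j) := by rw [Finset.sum_mul_sum]

/-- Unit group equivalence from CRT. -/
noncomputable def UE (hco : Nat.Coprime r s) : (ZMod (r * s))ˣ ≃* (ZMod r)ˣ × (ZMod s)ˣ :=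
  (Units.mapEquiv (ZMod.chineseRemainder hco).toMulEquiv).trans MulEquiv.prodUnits

lemma UE_fst_coe (hco : Nat.Coprime r s) (α : (ZMod (r * s))ˣ) :
    (((UE hco α).1 : (ZMod r)ˣ) : ZMod r) = CrH hco (α : ZMod (r * s)) := rfl

lemma UE_snd_coe (hco : Nat.Coprime r s) (α : (ZMod (r * s))ˣ) :
    (((UE hco α).2 : (ZMod s)ˣ) : ZMod s) = CsH hco (α : ZMod (r * s)) := rfl

set_option maxHeartbeats 1000000 in
lemma TZ_split (hco : Nat.Coprime r s) (u v : ℤ) (huv : u * s + v * r = 1)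
    (hu1 : (u : ZMod r) * ((s : ℕ) : ZMod r) = 1) (hv1 : (v : ZMod s) * ((r : ℕ) : ZMod s) = 1)
    (N1 N2 N3 M : ZMod (r * s)) :
    TZ (r * s) N1 N2 N3 M
      = TZ r ((u : ZMod r) * CrH hco N1) ((u : ZMod r) * CrH hco N2)
          ((u : ZMod r) * CrH hco N3) ((u : ZMod r) ^ 2 * CrH hco M)
      * TZ s ((v : ZMod s) * CsH hco N1) ((v : ZMod s) * CsH hco N2)
          ((v : ZMod s) * CsH hco N3) ((v : ZMod s) ^ 2 * CsH hco M) := by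
  classical
  set U : (ZMod r)ˣ := Units.mkOfMulEqOne _ _ hu1 with hU_def
  set V : (ZMod s)ˣ := Units.mkOfMulEqOne _ _ hv1 with hV_def
  have hUcoe : (U : ZMod r) = (u : ZMod r) := rfl
  have hVcoe : (V : ZMod s) = (v : ZMod s) := rfl
  -- the r-side and s-side summand functions
  set Fr : (ZMod r)ˣ → ℂ := fun β => SZ r (β : ZMod r) ((u : ZMod r) * CrH hco N1)
    * SZ r (β : ZMod r) ((u : ZMod r) * CrH hco N2)
    * SZ r (β : ZMod r) ((u : ZMod r) * CrH hco N3)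
    * Ψ (((β⁻¹ : (ZMod r)ˣ) : ZMod r) * ((u : ZMod r) ^ 2 * CrH hco M)) with hFr_def
  set Fs : (ZMod s)ˣ → ℂ := fun β => SZ s (β : ZMod s) ((v : ZMod s) * CsH hco N1)
    * SZ s (β : ZMod s) ((v : ZMod s) * CsH hco N2)
    * SZ s (β : ZMod s) ((v : ZMod s) * CsH hco N3)
    * Ψ (((β⁻¹ : (ZMod s)ˣ) : ZMod s) * ((v : ZMod s) ^ 2 * CsH hco M)) with hFs_def
  have main : TZ (r * s) N1 N2 N3 M = (∑ β1 : (ZMod r)ˣ, Fr (U * β1)) *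
      (∑ β2 : (ZMod s)ˣ, Fs (V * β2)) := by
    rw [TZ]
    calc ∑ α : (ZMod (r * s))ˣ, SZ (r * s) (α : ZMod (r * s)) N1 * SZ (r * s) (α : ZMod (r * s)) N2
          * SZ (r * s) (α : ZMod (r * s)) N3 *
          Ψ (((α⁻¹ : (ZMod (r * s))ˣ) : ZMod (r * s)) * M)
        = ∑ w : (ZMod r)ˣ × (ZMod s)ˣ, Fr (U * w.1) * Fs (V * w.2) := ?_
      _ = ∑ β1 : (ZMod r)ˣ, ∑ β2 : (ZMod s)ˣ, Fr (U * β1) * Fs (V * β2) := by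
          exact Fintype.sum_prod_type (f := fun w : (ZMod r)ˣ × (ZMod s)ˣ => Fr (U * w.1) * Fs (V * w.2))
      _ = (∑ β1 : (ZMod r)ˣ, Fr (U * β1)) * (∑ β2 : (ZMod s)ˣ, Fs (V * β2)) := by
          rw [Finset.sum_mul_sum]
    apply Fintype.sum_equiv (UE hco).toEquiv
    intro α
    have hEα : ((UE hco).toEquiv α) = UE hco α := rfl
    rw [hEα]
    -- split the three SZ factors and the twist
    rw [SZ_split hco u v huv (α : ZMod (r * s)) N1,
        SZ_split hco u v huv (α : ZMod (r * s)) N2,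
        SZ_split hco u v huv (α : ZMod (r * s)) N3]
    rw [psi_split hco u v huv (((α⁻¹ : (ZMod (r * s))ˣ) : ZMod (r * s)) * M)]
    have hr1 : (u : ZMod r) * CrH hco (α : ZMod (r * s)) = (U : ZMod r) * ((UE hco α).1 : ZMod r) := by
      rw [UE_fst_coe, hUcoe]
    have hs1 : (v : ZMod s) * CsH hco (α : ZMod (r * s)) = (V : ZMod s) * ((UE hco α).2 : ZMod s) := by
      rw [UE_snd_coe, hVcoe]
    have hrinv : CrH hco (((α⁻¹ : (ZMod (r * s))ˣ) : ZMod (r * s))) = (((UE hco α).1⁻¹ : (ZMod r)ˣ) : ZMod r) := by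
      rw [← UE_fst_coe hco α⁻¹, map_inv]
      rfl
    have hsinv : CsH hco (((α⁻¹ : (ZMod (r * s))ˣ) : ZMod (r * s))) = (((UE hco α).2⁻¹ : (ZMod s)ˣ) : ZMod s) := by
      rw [← UE_snd_coe hco α⁻¹, map_inv]
      rfl
    -- now identify with Fr (U * (UE α).1) * Fs (V * (UE α).2)
    rw [hFr_def, hFs_def]
    simp only
    have hUco : ((U * (UE hco α).1 : (ZMod r)ˣ) : ZMod r) = (U : ZMod r) * ((UE hco α).1 : ZMod r) :=
      Units.val_mul _ _
    have hVco : ((V * (UE hco α).2 : (ZMod s)ˣ) : ZMod s) = (V : ZMod s) * ((UE hco α).2 : ZMod s) :=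
      Units.val_mul _ _
    have hUinv : (((U * (UE hco α).1)⁻¹ : (ZMod r)ˣ) : ZMod r) * ((u : ZMod r) ^ 2 * CrH hco M)
        = (u : ZMod r) * (CrH hco ((α⁻¹ : (ZMod (r * s))ˣ) : ZMod (r * s)) * CrH hco M) := by
      rw [mul_inv, Units.val_mul, hrinv]
      have h1 : (u : ZMod r) * ((U⁻¹ : (ZMod r)ˣ) : ZMod r) = 1 := hu1
      linear_combination ((u : ZMod r) * (((UE hco α).1⁻¹ : (ZMod r)ˣ) : ZMod r) * CrH hco M) * h1
    have hVinv : (((V * (UE hco α).2)⁻¹ : (ZMod s)ˣ) : ZMod s) * ((v : ZMod s) ^ 2 * CsH hco M)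
        = (v : ZMod s) * (CsH hco ((α⁻¹ : (ZMod (r * s))ˣ) : ZMod (r * s)) * CsH hco M) := by
      rw [mul_inv, Units.val_mul, hsinv]
      have h1 : (v : ZMod s) * ((V⁻¹ : (ZMod s)ˣ) : ZMod s) = 1 := hv1
      linear_combination ((v : ZMod s) * (((UE hco α).2⁻¹ : (ZMod s)ˣ) : ZMod s) * CsH hco M) * h1
    rw [hUco, hVco, hUinv, hVinv, ← hr1, ← hs1]
    rw [map_mul (CrH hco), map_mul (CsH hco)]
    ring
  rw [main]
  congr 1
  · rw [TZ]
    apply Fintype.sum_equiv (Equiv.mulLeft U)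
    intro β
    rfl
  · rw [TZ]
    apply Fintype.sum_equiv (Equiv.mulLeft V)
    intro β
    rfl

end Split
end TGB

namespace TGB
open Finset

local notation "Ψ" => ZMod.stdAddChar

lemma SZ_abs_le_card {q : ℕ} [NeZero q] (A N : ZMod q) :
    ‖SZ q A N‖ ≤ (q : ℝ) := by
  calc ‖SZ q A N‖ ≤ ∑ x : ZMod q, ‖Ψ (A * x ^ 2 + N * x)‖ :=
        norm_sum_le _ _
    _ = (q : ℝ) := by
      rw [Finset.sum_congr rfl (fun x _ => psi_abs _), Finset.sum_const, Finset.card_univ,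
        ZMod.card, nsmul_eq_mul, mul_one]

lemma bezout (r s : ℕ) [NeZero r] [NeZero s] (hco : Nat.Coprime r s) :
    ∃ u v : ℤ, u * s + v * r = 1 ∧ (u : ZMod r) * ((s : ℕ) : ZMod r) = 1 ∧
      (v : ZMod s) * ((r : ℕ) : ZMod s) = 1 := by
  have hid := Nat.gcd_eq_gcd_ab r s
  rw [hco] at hid
  refine ⟨Nat.gcdB r s, Nat.gcdA r s, by push_cast at hid; linarith, ?_, ?_⟩
  · have h := congrArg (Int.cast : ℤ → ZMod r) hid.symm
    push_cast at h
    rw [ZMod.natCast_self] at h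
    rw [show ((s : ℕ) : ZMod r) = ((s : ℤ) : ZMod r) by push_cast; ring]
    push_cast
    linear_combination h
  · have h := congrArg (Int.cast : ℤ → ZMod s) hid.symm
    push_cast at h
    rw [ZMod.natCast_self] at h
    rw [show ((r : ℕ) : ZMod s) = ((r : ℤ) : ZMod s) by push_cast; ring]
    push_cast
    linear_combination h

/-- Abs-level splitting for coprime moduli. -/
lemma TZ_split_abs {r s : ℕ} [NeZero r] [NeZero s] (hco : Nat.Coprime r s)
    (N1 N2 N3 M : ZMod (r * s)) :
    ∃ (A1 A2 A3 A4 : ZMod r) (B1 B2 B3 B4 : ZMod s),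
      ‖TZ (r * s) N1 N2 N3 M‖
        = ‖TZ r A1 A2 A3 A4‖ * ‖TZ s B1 B2 B3 B4‖ := by
  obtain ⟨u, v, huv, hu1, hv1⟩ := bezout r s hco
  refine ⟨(u : ZMod r) * CrH hco N1, (u : ZMod r) * CrH hco N2, (u : ZMod r) * CrH hco N3,
    (u : ZMod r) ^ 2 * CrH hco M, (v : ZMod s) * CsH hco N1, (v : ZMod s) * CsH hco N2,
    (v : ZMod s) * CsH hco N3, (v : ZMod s) ^ 2 * CsH hco M, ?_⟩
  rw [TZ_split hco u v huv hu1 hv1 N1 N2 N3 M, norm_mul]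

lemma TZ_one (N1 N2 N3 M : ZMod 1) : ‖TZ 1 N1 N2 N3 M‖ ≤ 1 := by
  have hψ : ∀ z : ZMod 1, Ψ z = 1 := by
    intro z
    rw [show z = 0 from Subsingleton.elim z 0]
    exact AddChar.map_zero_eq_one _
  have hSZ : ∀ A N : ZMod 1, SZ 1 A N = 1 := by
    intro A N
    rw [SZ]
    simp [hψ]
  rw [TZ]
  simp [hSZ, hψ]

lemma TZ_two (N1 N2 N3 M : ZMod 2) : ‖TZ 2 N1 N2 N3 M‖ ≤ 8 := by
  have h := TZ_abs_le_totient (q := 2) (B := 2)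
    (fun A N => by simpa using SZ_abs_le_card (q := 2) A N) N1 N2 N3 M
  norm_num [Nat.totient_prime Nat.prime_two] at h
  exact h

/-- The squarefree odd case, by strong induction via auxiliary bound. -/
lemma TZ_sf_odd_aux : ∀ (n : ℕ) (q : ℕ) [NeZero q], q ≤ n → Squarefree q → Odd q →
    ∀ N1 N2 N3 M : ZMod q, ‖TZ q N1 N2 N3 M‖ ≤ (q : ℝ) ^ 2 := by
  intro n
  induction n with
  | zero =>
    intro q _ hle _ _
    exact absurd (Nat.le_zero.mp hle) (NeZero.ne q)
  | succ n ihn =>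
    intro q instq hle hsf hodd N1 N2 N3 M
    by_cases hq1 : q = 1
    · subst hq1
      simpa using TZ_one N1 N2 N3 M
    by_cases hqp : q.Prime
    · haveI : Fact q.Prime := ⟨hqp⟩
      exact TZ_prime_bound q (by rintro rfl; revert hodd; decide) N1 N2 N3 M
    -- composite case
    obtain ⟨p, hp, hpd⟩ := Nat.exists_prime_and_dvd hq1
    obtain ⟨t, ht⟩ := hpd
    haveI : NeZero p := ⟨hp.ne_zero⟩
    have ht0 : t ≠ 0 := by
      intro h; rw [h, mul_zero] at ht; exact (NeZero.ne q) ht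
    haveI : NeZero t := ⟨ht0⟩
    have hco : Nat.Coprime p t := by
      rw [hp.coprime_iff_not_dvd]
      intro hdvd
      obtain ⟨w, hw⟩ := hdvd
      have : p * p ∣ q := ⟨w, by rw [ht, hw]; ring⟩
      exact hp.not_isUnit (hsf p this)
    have ht1 : t ≠ 1 := by
      intro h1
      rw [h1, mul_one] at ht
      exact hqp (ht ▸ hp)
    have htlt : t ≤ n := by
      have h2 : 2 ≤ p := hp.two_le
      have : t < q := by
        rw [ht]
        calc t < 2 * t := by omega
          _ ≤ p * t := Nat.mul_le_mul_right t h2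
      omega
    have hsf_t : Squarefree t := hsf.squarefree_of_dvd ⟨p, by rw [ht]; ring⟩
    have hodd_pt : Odd (p * t) := ht ▸ hodd
    have hodd_t : Odd t := (Nat.odd_mul.mp hodd_pt).2
    have hodd_p : Odd p := (Nat.odd_mul.mp hodd_pt).1
    have hp2 : p ≠ 2 := by
      rintro rfl; revert hodd_p; decide
    haveI : Fact p.Prime := ⟨hp⟩
    subst ht
    obtain ⟨A1, A2, A3, A4, B1, B2, B3, B4, habs⟩ := TZ_split_abs hco N1 N2 N3 M
    rw [habs]
    have h1 := TZ_prime_bound p hp2 A1 A2 A3 A4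
    have h2 := ihn t htlt hsf_t hodd_t B1 B2 B3 B4
    calc ‖TZ p A1 A2 A3 A4‖ * ‖TZ t B1 B2 B3 B4‖
        ≤ (p : ℝ) ^ 2 * (t : ℝ) ^ 2 := by
          exact mul_le_mul h1 h2 (norm_nonneg _) (by positivity)
      _ = ((p * t : ℕ) : ℝ) ^ 2 := by push_cast; ring

lemma TZ_sf_odd (q : ℕ) [NeZero q] (hsf : Squarefree q) (hodd : Odd q)
    (N1 N2 N3 M : ZMod q) : ‖TZ q N1 N2 N3 M‖ ≤ (q : ℝ) ^ 2 :=
  TZ_sf_odd_aux q q le_rfl hsf hodd N1 N2 N3 M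

/-- Squarefree case, any parity. -/
lemma TZ_sf (q : ℕ) [NeZero q] (hsf : Squarefree q)
    (N1 N2 N3 M : ZMod q) : ‖TZ q N1 N2 N3 M‖ ≤ 2 * (q : ℝ) ^ 2 := by
  rcases Nat.even_or_odd q with he | ho
  · -- q = 2 * t with t odd
    obtain ⟨t, ht⟩ := he
    have ht' : q = 2 * t := by omega
    have ht0 : t ≠ 0 := by rintro rfl; exact (NeZero.ne q) (by omega)
    haveI : NeZero t := ⟨ht0⟩
    have hodd_t : Odd t := by
      rcases Nat.even_or_odd t with he2 | ho2
      · exfalso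
        rcases he2 with ⟨k, hk⟩
        have : (2 * 2) ∣ q := ⟨k, by omega⟩
        have h4 : ¬ Squarefree q := by
          intro hs
          exact Nat.prime_two.not_isUnit (hs 2 (by omega))
        exact h4 hsf
      · exact ho2
    have hco : Nat.Coprime 2 t :=
      (Nat.prime_two.coprime_iff_not_dvd).mpr (by have := Nat.odd_iff.mp hodd_t; omega)
    have hsf_t : Squarefree t := hsf.squarefree_of_dvd ⟨2, by omega⟩
    subst ht'
    obtain ⟨A1, A2, A3, A4, B1, B2, B3, B4, habs⟩ := TZ_split_abs hco N1 N2 N3 M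
    rw [habs]
    have h1 := TZ_two A1 A2 A3 A4
    have h2 := TZ_sf_odd t hsf_t hodd_t B1 B2 B3 B4
    calc ‖TZ 2 A1 A2 A3 A4‖ * ‖TZ t B1 B2 B3 B4‖
        ≤ 8 * (t : ℝ) ^ 2 := mul_le_mul h1 h2 (norm_nonneg _) (by norm_num)
      _ = 2 * ((2 * t : ℕ) : ℝ) ^ 2 := by push_cast; ring
  · exact le_trans (TZ_sf_odd q hsf ho N1 N2 N3 M) (by nlinarith [sq_nonneg ((q : ℝ))])

/-- Trivial bound for arbitrary modulus (used for the squarefull part), odd case. -/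
lemma sqrt_cube (x : ℝ) (hx : 0 ≤ x) : Real.sqrt x ^ 3 = x * Real.sqrt x := by
  have h : Real.sqrt x ^ 3 = Real.sqrt x ^ 2 * Real.sqrt x := by ring
  rw [h, Real.sq_sqrt hx]

lemma TZ_triv_odd (q : ℕ) [NeZero q] (hodd : Odd q) (N1 N2 N3 M : ZMod q) :
    ‖TZ q N1 N2 N3 M‖ ≤ (q : ℝ) ^ 2 * Real.sqrt q := by
  have h := TZ_abs_le_of_SZ_bound (fun A N => SZ_abs_le_sqrt_odd hodd A N) N1 N2 N3 M
  refine le_trans h ?_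
  rw [sqrt_cube _ (Nat.cast_nonneg q)]
  ring_nf
  exact le_refl _

/-- Trivial bound for arbitrary modulus, general case. -/
lemma TZ_triv (q : ℕ) [NeZero q] (N1 N2 N3 M : ZMod q) :
    ‖TZ q N1 N2 N3 M‖ ≤ (q : ℝ) * Real.sqrt (2 * q) ^ 3 :=
  TZ_abs_le_of_SZ_bound (fun A N => SZ_abs_le_sqrt_two A N) N1 N2 N3 M

end TGB

namespace TGB

lemma rpow_five_half (q : ℕ) (hq : 0 < q) :
    (q : ℝ) ^ ((5 : ℝ) / 2) = (q : ℝ) ^ 2 * Real.sqrt q := by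
  have hq' : (0 : ℝ) < q := by exact_mod_cast hq
  rw [show ((5 : ℝ) / 2) = 2 + (1 / 2 : ℝ) by norm_num, Real.rpow_add hq']
  congr 1
  · rw [show (2 : ℝ) = ((2 : ℕ) : ℝ) by norm_num, Real.rpow_natCast]
  · exact (Real.sqrt_eq_rpow _).symm

lemma sqrt_two_le_two : Real.sqrt 2 ≤ 2 := by
  nlinarith [Real.sq_sqrt (show (0:ℝ) ≤ 2 by norm_num), Real.sqrt_nonneg 2]

end TGB

theorem T_general_bound (q1 q2 : ℕ) (hq1 : 0 < q1) (hq2 : 0 < q2)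
    (hco : Nat.Coprime q1 q2) (hsf : Squarefree q1)
    (hfull : ∀ p : ℕ, p.Prime → p ∣ q2 → p ^ 2 ∣ q2) (n1 n2 n3 m : ℤ) :
    ‖Tq (q1 * q2) n1 n2 n3 m‖ ≤ 4 * (q1 : ℝ) ^ 2 * (q2 : ℝ) ^ ((5 : ℝ) / 2) := by
  haveI : NeZero q1 := ⟨hq1.ne'⟩
  haveI : NeZero q2 := ⟨hq2.ne'⟩
  rw [TGB.Tq_eq_TZ]
  obtain ⟨A1, A2, A3, A4, B1, B2, B3, B4, habs⟩ :=
    TGB.TZ_split_abs hco ((n1 : ℤ) : ZMod (q1 * q2)) ((n2 : ℤ) : ZMod (q1 * q2))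
      ((n3 : ℤ) : ZMod (q1 * q2)) ((m : ℤ) : ZMod (q1 * q2))
  rw [habs]
  rw [TGB.rpow_five_half q2 hq2]
  have hq2' : (0 : ℝ) < (q2 : ℝ) := by exact_mod_cast hq2
  rcases Nat.even_or_odd q1 with he1 | ho1
  · -- q1 even, so q2 is odd
    have ho2 : Odd q2 := by
      rcases Nat.even_or_odd q2 with he2 | ho2
      · exfalso
        obtain ⟨a, hha⟩ := he1
        obtain ⟨b, hhb⟩ := he2
        have h1 : 2 ∣ Nat.gcd q1 q2 := Nat.dvd_gcd ⟨a, by omega⟩ ⟨b, by omega⟩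
        rw [hco] at h1
        omega
      · exact ho2
    have hX := TGB.TZ_sf q1 hsf A1 A2 A3 A4
    have hY := TGB.TZ_triv_odd q2 ho2 B1 B2 B3 B4
    calc ‖TGB.TZ q1 A1 A2 A3 A4‖ * ‖TGB.TZ q2 B1 B2 B3 B4‖
        ≤ (2 * (q1 : ℝ) ^ 2) * ((q2 : ℝ) ^ 2 * Real.sqrt q2) :=
          mul_le_mul hX hY (norm_nonneg _) (by positivity)
      _ ≤ 4 * (q1 : ℝ) ^ 2 * ((q2 : ℝ) ^ 2 * Real.sqrt q2) := by
          nlinarith [sq_nonneg ((q1:ℝ)), sq_nonneg ((q2:ℝ)), Real.sqrt_nonneg ((q2:ℝ)),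
            sq_nonneg ((q1:ℝ) * (q2:ℝ)), mul_pos hq2' hq2']
      _ = 4 * (q1 : ℝ) ^ 2 * ((q2 : ℝ) ^ 2 * Real.sqrt q2) := rfl
  · -- q1 odd
    have hX := TGB.TZ_sf_odd q1 hsf ho1 A1 A2 A3 A4
    have hY := TGB.TZ_triv q2 B1 B2 B3 B4
    have hcube : Real.sqrt (2 * (q2 : ℝ)) ^ 3 = (2 * (q2 : ℝ)) * Real.sqrt (2 * q2) :=
      TGB.sqrt_cube _ (by positivity)
    have hsplit : Real.sqrt (2 * (q2 : ℝ)) = Real.sqrt 2 * Real.sqrt q2 :=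
      Real.sqrt_mul (by norm_num) _
    calc ‖TGB.TZ q1 A1 A2 A3 A4‖ * ‖TGB.TZ q2 B1 B2 B3 B4‖
        ≤ (q1 : ℝ) ^ 2 * ((q2 : ℝ) * Real.sqrt (2 * (q2 : ℝ)) ^ 3) :=
          mul_le_mul hX hY (norm_nonneg _) (by positivity)
      _ = Real.sqrt 2 * (2 * ((q1 : ℝ) ^ 2 * ((q2 : ℝ) ^ 2 * Real.sqrt q2))) := by
          rw [hcube, hsplit]; ring
      _ ≤ 2 * (2 * ((q1 : ℝ) ^ 2 * ((q2 : ℝ) ^ 2 * Real.sqrt q2))) := by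
          apply mul_le_mul_of_nonneg_right TGB.sqrt_two_le_two (by positivity)
      _ = 4 * (q1 : ℝ) ^ 2 * ((q2 : ℝ) ^ 2 * Real.sqrt q2) := by ring
end

section
/- There is no function of the form C1 X³ log X + C2 X³ approximating S_3(X) with error o(X² log X): that is, if S_3(X) = C1 X³ log X + C2 X³ + E(X) for all X > 0 with constants C1, C2, and C1 = 8ζ(3)/(5ζ(5)) > 0, then E(X) is not o(X² log X) as X → ∞. (Key step: S_3(N + 1/3) = S_3(N + 2/3) for every positive integer N, while the main term changes by an amount ≫ N² log N.) -/
/-- `S₃(X) = Σ_{1 ≤ m1,m2,m3 ≤ X} τ(m1² + m2² + m3²)`. -/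
noncomputable def S3 (X : ℝ) : ℝ :=
  ∑ m1 ∈ Finset.Icc 1 ⌊X⌋₊, ∑ m2 ∈ Finset.Icc 1 ⌊X⌋₊, ∑ m3 ∈ Finset.Icc 1 ⌊X⌋₊,
    ((m1 ^ 2 + m2 ^ 2 + m3 ^ 2 : ℕ).divisors.card : ℝ)

open Filter Asymptotics Real

private lemma floor_shift (n : ℕ) (c : ℝ) (hc0 : 0 ≤ c) (hc1 : c < 1) :
    ⌊(n : ℝ) + c⌋₊ = n := by
  rw [Nat.floor_eq_iff (by positivity)]
  exact ⟨by linarith, by linarith⟩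

private lemma n2_oo : (fun n : ℕ => (n:ℝ)^2) =o[atTop]
    fun n : ℕ => (n:ℝ)^2 * Real.log n := by
  rw [isLittleO_iff]
  intro c hc
  have h1 : ∀ᶠ n : ℕ in atTop, 1/c ≤ Real.log n :=
    (Real.tendsto_log_atTop.comp tendsto_natCast_atTop_atTop).eventually_ge_atTop (1/c)
  filter_upwards [h1, eventually_ge_atTop 1] with n hln hn1
  have hn : (1:ℝ) ≤ (n:ℝ) := by exact_mod_cast hn1
  have hlog : 0 < Real.log n := lt_of_lt_of_le (by positivity) hln
  rw [Real.norm_eq_abs, Real.norm_eq_abs, abs_of_nonneg (by positivity),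
    abs_of_nonneg (by positivity)]
  have : 1 ≤ c * Real.log n := by
    rw [div_le_iff₀ hc] at hln
    linarith [mul_comm (Real.log n) c]
  nlinarith [sq_nonneg (n:ℝ)]

private lemma shift_bigO (c : ℝ) (hc0 : 0 ≤ c) (hc1 : c ≤ 1) :
    (fun n : ℕ => ((n:ℝ)+c)^2 * Real.log ((n:ℝ)+c)) =O[atTop]
    fun n : ℕ => (n:ℝ)^2 * Real.log n := by
  rw [isBigO_iff]
  refine ⟨8, ?_⟩
  filter_upwards [eventually_ge_atTop 2] with n hn2
  have hn : (2:ℝ) ≤ (n:ℝ) := by exact_mod_cast hn2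
  have hu1 : (1:ℝ) ≤ (n:ℝ) + c := by linarith
  have hlu0 : 0 ≤ Real.log ((n:ℝ)+c) := Real.log_nonneg hu1
  have hlog : 0 < Real.log n := Real.log_pos (by linarith)
  have hsq : (n:ℝ) + c ≤ (n:ℝ)^2 := by nlinarith
  have hlu : Real.log ((n:ℝ)+c) ≤ 2 * Real.log n := by
    calc Real.log ((n:ℝ)+c) ≤ Real.log ((n:ℝ)^2) := by
          apply Real.log_le_log (by linarith) hsq
      _ = 2 * Real.log n := by
          rw [Real.log_pow]; push_cast; ring
  have hu2 : ((n:ℝ)+c)^2 ≤ 4 * (n:ℝ)^2 := by nlinarith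
  rw [Real.norm_eq_abs, Real.norm_eq_abs, abs_of_nonneg (by positivity),
    abs_of_nonneg (by positivity)]
  nlinarith [mul_le_mul hu2 hlu hlu0 (by positivity : (0:ℝ) ≤ 4*(n:ℝ)^2)]

set_option maxHeartbeats 1000000 in
theorem error_term_not_littleO (C1 C2 : ℝ) (E : ℝ → ℝ)
    (hC1 : (C1 : ℂ) = 8 * riemannZeta 3 / (5 * riemannZeta 5))
    (h : ∀ X : ℝ, 0 < X → S3 X = C1 * X ^ 3 * Real.log X + C2 * X ^ 3 + E X) :
    ¬ (E =o[Filter.atTop] fun X : ℝ => X ^ 2 * Real.log X) := by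
  intro hE
  have hz3 : riemannZeta 3 ≠ 0 := riemannZeta_ne_zero_of_one_lt_re (by norm_num)
  have hz5 : riemannZeta 5 ≠ 0 := riemannZeta_ne_zero_of_one_lt_re (by norm_num)
  have hC1ne : C1 ≠ 0 := by
    intro h0
    rw [h0, Complex.ofReal_zero, eq_comm, div_eq_zero_iff] at hC1
    rcases hC1 with h' | h'
    · exact hz3 ((mul_eq_zero.mp h').resolve_left (by norm_num))
    · exact hz5 ((mul_eq_zero.mp h').resolve_left (by norm_num))
  have hut : Tendsto (fun n : ℕ => (n:ℝ) + 1/3) atTop atTop :=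
    tendsto_atTop_add_const_right _ _ tendsto_natCast_atTop_atTop
  have hvt : Tendsto (fun n : ℕ => (n:ℝ) + 2/3) atTop atTop :=
    tendsto_atTop_add_const_right _ _ tendsto_natCast_atTop_atTop
  have hEu : (fun n : ℕ => E ((n:ℝ)+1/3)) =o[atTop]
      fun n : ℕ => (n:ℝ)^2 * Real.log n :=
    (hE.comp_tendsto hut).trans_isBigO (shift_bigO (1/3) (by norm_num) (by norm_num))
  have hEv : (fun n : ℕ => E ((n:ℝ)+2/3)) =o[atTop]
      fun n : ℕ => (n:ℝ)^2 * Real.log n :=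
    (hE.comp_tendsto hvt).trans_isBigO (shift_bigO (2/3) (by norm_num) (by norm_num))
  -- the difference of main terms
  set D : ℕ → ℝ := fun n =>
    C1 * (((n:ℝ)+2/3)^3 * Real.log ((n:ℝ)+2/3) - ((n:ℝ)+1/3)^3 * Real.log ((n:ℝ)+1/3))
      + C2 * (((n:ℝ)+2/3)^3 - ((n:ℝ)+1/3)^3) with hDdef
  have hkey : ∀ n : ℕ, 1 ≤ n → E ((n:ℝ)+1/3) - E ((n:ℝ)+2/3) = D n := by
    intro n hn
    have hn0 : (0:ℝ) < (n:ℝ) := by exact_mod_cast hn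
    have hS : S3 ((n:ℝ)+1/3) = S3 ((n:ℝ)+2/3) := by
      unfold S3
      rw [floor_shift n (1/3) (by norm_num) (by norm_num),
        floor_shift n (2/3) (by norm_num) (by norm_num)]
    have h1 := h ((n:ℝ)+1/3) (by linarith)
    have h2 := h ((n:ℝ)+2/3) (by linarith)
    simp only [hDdef]
    linear_combination h2 - h1 + hS
  have hD : D =o[atTop] fun n : ℕ => (n:ℝ)^2 * Real.log n := by
    refine (hEu.sub hEv).congr' ?_ EventuallyEq.rfl
    filter_upwards [eventually_ge_atTop 1] with n hn
    exact hkey n hn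
  -- remainder is O(n^2)
  have hR : (fun n : ℕ => D n - C1 * (n:ℝ)^2 * Real.log ((n:ℝ)+1/3)) =O[atTop]
      fun n : ℕ => (n:ℝ)^2 := by
    rw [isBigO_iff]
    refine ⟨5 * |C1| + 3 * |C2|, ?_⟩
    filter_upwards [eventually_ge_atTop 2] with n hn2
    have hn : (2:ℝ) ≤ (n:ℝ) := by exact_mod_cast hn2
    have hid : D n - C1 * (n:ℝ)^2 * Real.log ((n:ℝ)+1/3)
        = C1 * (((n:ℝ) + 7/27) * Real.log ((n:ℝ)+1/3))
          + C1 * (((n:ℝ)+2/3)^3 * (Real.log ((n:ℝ)+2/3) - Real.log ((n:ℝ)+1/3)))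
          + C2 * ((n:ℝ)^2 + (n:ℝ) + 7/27) := by
      simp only [hDdef]; ring
    have hupos : (0:ℝ) < (n:ℝ)+1/3 := by linarith
    have hlu0 : 0 ≤ Real.log ((n:ℝ)+1/3) := Real.log_nonneg (by linarith)
    have hlu : Real.log ((n:ℝ)+1/3) ≤ (n:ℝ) := by
      have := Real.log_le_sub_one_of_pos hupos
      linarith
    have hldiff0 : 0 ≤ Real.log ((n:ℝ)+2/3) - Real.log ((n:ℝ)+1/3) := by
      have := Real.log_le_log hupos (by linarith : (n:ℝ)+1/3 ≤ (n:ℝ)+2/3)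
      linarith
    have hldiff : Real.log ((n:ℝ)+2/3) - Real.log ((n:ℝ)+1/3) ≤ 1/(3*(n:ℝ)) := by
      have hdiv : Real.log ((n:ℝ)+2/3) - Real.log ((n:ℝ)+1/3)
          = Real.log (((n:ℝ)+2/3)/((n:ℝ)+1/3)) := by
        rw [Real.log_div (by linarith) (by linarith)]
      have hq : Real.log (((n:ℝ)+2/3)/((n:ℝ)+1/3)) ≤ ((n:ℝ)+2/3)/((n:ℝ)+1/3) - 1 :=
        Real.log_le_sub_one_of_pos (by positivity)
      have hfrac : ((n:ℝ)+2/3)/((n:ℝ)+1/3) - 1 ≤ 1/(3*(n:ℝ)) := by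
        rw [div_sub_one (by linarith)]
        rw [div_le_div_iff₀ (by linarith) (by linarith)]
        ring_nf
        nlinarith
      linarith [hdiv ▸ hq.trans hfrac]
    have hx0 : 0 ≤ ((n:ℝ) + 7/27) * Real.log ((n:ℝ)+1/3) := by positivity
    have hx1 : ((n:ℝ) + 7/27) * Real.log ((n:ℝ)+1/3) ≤ 2 * (n:ℝ)^2 := by nlinarith
    have hy0 : 0 ≤ ((n:ℝ)+2/3)^3 * (Real.log ((n:ℝ)+2/3) - Real.log ((n:ℝ)+1/3)) := by
      positivity
    have hy1 : ((n:ℝ)+2/3)^3 * (Real.log ((n:ℝ)+2/3) - Real.log ((n:ℝ)+1/3))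
        ≤ 3 * (n:ℝ)^2 := by
      have hv3 : ((n:ℝ)+2/3)^3 ≤ 8*(n:ℝ)^3 := by nlinarith
      have hv30 : (0:ℝ) ≤ ((n:ℝ)+2/3)^3 := by positivity
      have := mul_le_mul hv3 hldiff hldiff0 (by positivity : (0:ℝ) ≤ 8*(n:ℝ)^3)
      have h8 : 8*(n:ℝ)^3 * (1/(3*(n:ℝ))) = (8/3)*(n:ℝ)^2 := by
        field_simp
      rw [h8] at this
      linarith
    have hz1 : |(n:ℝ)^2 + (n:ℝ) + 7/27| ≤ 3 * (n:ℝ)^2 :=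
      abs_le.mpr ⟨by nlinarith, by nlinarith⟩
    rw [hid, Real.norm_eq_abs, Real.norm_eq_abs,
      abs_of_nonneg (by positivity : (0:ℝ) ≤ (n:ℝ)^2)]
    have hb1 : |C1 * (((n:ℝ) + 7/27) * Real.log ((n:ℝ)+1/3))| ≤ |C1| * (2 * (n:ℝ)^2) := by
      rw [abs_mul, abs_of_nonneg hx0]
      exact mul_le_mul_of_nonneg_left hx1 (abs_nonneg C1)
    have hb2 : |C1 * (((n:ℝ)+2/3)^3 * (Real.log ((n:ℝ)+2/3) - Real.log ((n:ℝ)+1/3)))|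
        ≤ |C1| * (3 * (n:ℝ)^2) := by
      rw [abs_mul, abs_of_nonneg hy0]
      exact mul_le_mul_of_nonneg_left hy1 (abs_nonneg C1)
    have hb3 : |C2 * ((n:ℝ)^2 + (n:ℝ) + 7/27)| ≤ |C2| * (3 * (n:ℝ)^2) := by
      rw [abs_mul]
      exact mul_le_mul_of_nonneg_left hz1 (abs_nonneg C2)
    have habs := abs_add_three
      (C1 * (((n:ℝ) + 7/27) * Real.log ((n:ℝ)+1/3)))
      (C1 * (((n:ℝ)+2/3)^3 * (Real.log ((n:ℝ)+2/3) - Real.log ((n:ℝ)+1/3))))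
      (C2 * ((n:ℝ)^2 + (n:ℝ) + 7/27))
    nlinarith [habs, hb1, hb2, hb3]
  -- hence the leading term is o(n^2 log n)
  have hmain : (fun n : ℕ => C1 * (n:ℝ)^2 * Real.log ((n:ℝ)+1/3)) =o[atTop]
      fun n : ℕ => (n:ℝ)^2 * Real.log n := by
    have := hD.sub (hR.trans_isLittleO n2_oo)
    refine this.congr' ?_ EventuallyEq.rfl
    filter_upwards with n
    ring
  -- contradiction
  rw [isLittleO_iff] at hmain
  have hcpos : 0 < |C1|/2 := by positivity
  obtain ⟨n, hb, hn2⟩ := ((hmain hcpos).and (eventually_ge_atTop 2)).exists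
  have hn : (2:ℝ) ≤ (n:ℝ) := by exact_mod_cast hn2
  have hlog : 0 < Real.log n := Real.log_pos (by linarith)
  have hlu : Real.log (n:ℝ) ≤ Real.log ((n:ℝ)+1/3) :=
    Real.log_le_log (by linarith) (by linarith)
  rw [Real.norm_eq_abs, Real.norm_eq_abs, abs_mul, abs_mul,
    abs_of_nonneg (by positivity : (0:ℝ) ≤ (n:ℝ)^2),
    abs_of_nonneg (Real.log_nonneg (by linarith)),
    abs_of_nonneg (by positivity : (0:ℝ) ≤ (n:ℝ)^2 * Real.log n)] at hb
  have hC1pos : 0 < |C1| := abs_pos.mpr hC1ne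
  nlinarith [mul_le_mul_of_nonneg_left hlu (by positivity : (0:ℝ) ≤ |C1| * (n:ℝ)^2),
    mul_pos (mul_pos hC1pos (by positivity : (0:ℝ) < (n:ℝ)^2)) hlog]
end
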